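/- arXiv:2403.06191 — 5 statements merged into one kernel-verified Lean document; each statement's English description precedes it below -/
import Mathlib

section
/- Let Q : ℝ → ℝ be an even polynomial of degree 2n ≥ 4 such that Q(0) = 0, Q(r) > 0 for all r ≠ 0, and the coefficient of r² in Q equals 1. Let m, ℓ ∈ ℕ. Then there exists a constant C > 0, depending only on Q, m and ℓ, such that for every ε ∈ (0,1], every x₀ > 0 and every x₁ ∈ ℝ, one has |∫_ℝ (2πik)^ℓ (ε⁻² Q(2πεk))^m exp(−ε⁻² Q(2πεk) x₀) e^{2πik x₁} dk| ≤ C x₀^{−m−(ℓ+1)/2}. -/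
/-!
Since `Q` is positive away from its zero at the origin and `Q''(0) > 0`, it dominates `c r²` for
some `c > 0`, so the rescaled symbol `F = ε⁻² Q(2πε ·)` satisfies `F(k) ≥ 4π²c k²` uniformly in
`ε`. Half of the damping `e^{-F x₀}` absorbs `F^m` at the cost of `x₀^{-m}`; the other half is
bounded by a Gaussian of width `x₀^{-1/2}`, whose `ℓ`-th absolute moment is a multiple of
`x₀^{-(ℓ+1)/2}`.
-/

open MeasureTheory Real
open scoped Nat Polynomial

namespace Polynomial

lemma exists_pos_le_eval_of_forall_pos {P : ℝ[X]} (hP : ∀ x, 0 < P.eval x) :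
    ∃ c > 0, ∀ x, c ≤ P.eval x := by
  obtain ⟨x₀, hx₀⟩ := P.exists_forall_norm_le
  refine ⟨P.eval x₀, hP x₀, fun x => ?_⟩
  simpa [abs_of_pos (hP _)] using hx₀ x

lemma coeff_one_eq_zero_of_isLocalMin {Q : ℝ[X]} (h : IsLocalMin (fun x => Q.eval x) 0) :
    Q.coeff 1 = 0 := by
  simpa [← coeff_zero_eq_eval_zero, coeff_derivative] using h.hasDerivAt_eq_zero (Q.hasDerivAt 0)

lemma exists_pos_mul_sq_le_eval {Q : ℝ[X]} (hzero : Q.eval 0 = 0)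
    (hpos : ∀ r, r ≠ 0 → 0 < Q.eval r) (hcoeff : 0 < Q.coeff 2) :
    ∃ c > 0, ∀ r, c * r ^ 2 ≤ Q.eval r := by
  have hmin : IsLocalMin (fun x => Q.eval x) 0 := Filter.Eventually.of_forall fun r => by
    show Q.eval 0 ≤ Q.eval r
    rcases eq_or_ne r 0 with rfl | hr
    · rfl
    · exact hzero.symm ▸ (hpos r hr).le
  obtain ⟨P, rfl⟩ : X ^ 2 ∣ Q := by
    refine X_pow_dvd_iff.mpr fun d hd => ?_
    interval_cases d
    · rwa [coeff_zero_eq_eval_zero]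
    · exact coeff_one_eq_zero_of_isLocalMin hmin
  have hP : ∀ x, 0 < P.eval x := by
    intro x
    rcases eq_or_ne x 0 with rfl | hx
    · simpa [← coeff_zero_eq_eval_zero, coeff_X_pow_mul'] using hcoeff
    · exact pos_of_mul_pos_right (by simpa using hpos x hx) (sq_nonneg x)
  obtain ⟨c, hc, hcP⟩ := exists_pos_le_eval_of_forall_pos hP
  exact ⟨c, hc, fun r => by simpa [mul_comm] using mul_le_mul_of_nonneg_left (hcP r) (sq_nonneg r)⟩

end Polynomial

lemma integral_abs_rpow_mul_exp_neg_mul_sq {q b : ℝ} (hq : -1 < q) (hb : 0 < b) :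
    ∫ x, |x| ^ q * exp (-b * x ^ 2) = b ^ (-(q + 1) / 2) * Gamma ((q + 1) / 2) := by
  have hIoi := integral_rpow_mul_exp_neg_mul_rpow two_pos hq hb
  have habs := integral_comp_abs (f := fun x => x ^ q * exp (-b * x ^ 2))
  simp only [rpow_two, sq_abs] at hIoi habs
  rw [habs, hIoi]
  ring

lemma integrable_abs_rpow_mul_exp_neg_mul_sq {q b : ℝ} (hq : -1 < q) (hb : 0 < b) :
    Integrable fun x : ℝ => |x| ^ q * exp (-b * x ^ 2) := by
  refine .of_integral_ne_zero ?_
  rw [integral_abs_rpow_mul_exp_neg_mul_sq hq hb]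
  have : 0 < Gamma ((q + 1) / 2) := Gamma_pos_of_pos (by linarith)
  positivity

lemma pow_mul_exp_neg_mul_le {t x : ℝ} (ht : 0 ≤ t) (hx : 0 < x) (m : ℕ) :
    t ^ m * exp (-(t * x)) ≤ m ! * (2 / x) ^ m * exp (-(t * x / 2)) := by
  have hpow : t ^ m ≤ m ! * (2 / x) ^ m * exp (t * x / 2) := by
    have h := Real.pow_div_factorial_le_exp _ (by positivity : 0 ≤ t * x / 2) m
    rw [div_le_iff₀ (by positivity)] at h
    calc t ^ m = (2 / x) ^ m * (t * x / 2) ^ m := by rw [← mul_pow]; field_simp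
      _ ≤ (2 / x) ^ m * (exp (t * x / 2) * m !) := by gcongr
      _ = _ := by ring
  calc t ^ m * exp (-(t * x)) ≤ m ! * (2 / x) ^ m * exp (t * x / 2) * exp (-(t * x)) := by gcongr
    _ = _ := by rw [mul_assoc, ← exp_add]; ring_nf

lemma norm_fourier_integrand_le {β F x₀ : ℝ} (k x₁ : ℝ) (hβ : 0 ≤ β) (hF : β * k ^ 2 ≤ F)
    (hx₀ : 0 < x₀) (m ℓ : ℕ) :
    ‖(2 * (π : ℂ) * Complex.I * (k : ℂ)) ^ ℓ * ((F : ℝ) : ℂ) ^ m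
        * Complex.exp ((-(F * x₀) : ℝ) : ℂ)
        * Complex.exp (2 * (π : ℂ) * Complex.I * (k : ℂ) * (x₁ : ℂ))‖
      ≤ (2 * π) ^ ℓ * (m ! * (2 / x₀) ^ m) * (|k| ^ (ℓ : ℝ) * exp (-(β * x₀ / 2) * k ^ 2)) := by
  have hF₀ : 0 ≤ F := (by positivity : 0 ≤ β * k ^ 2).trans hF
  have hgauss : exp (-(F * x₀ / 2)) ≤ exp (-(β * x₀ / 2) * k ^ 2) := by
    gcongr
    nlinarith
  calc _ = (2 * π) ^ ℓ * |k| ^ ℓ * (F ^ m * exp (-(F * x₀))) := by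
        simp [Complex.norm_exp, abs_of_pos pi_pos, abs_of_nonneg hF₀, mul_pow]
        ring
    _ ≤ (2 * π) ^ ℓ * |k| ^ ℓ * (m ! * (2 / x₀) ^ m * exp (-(F * x₀ / 2))) :=
        mul_le_mul_of_nonneg_left (pow_mul_exp_neg_mul_le hF₀ hx₀ m) (by positivity)
    _ ≤ (2 * π) ^ ℓ * |k| ^ ℓ * (m ! * (2 / x₀) ^ m * exp (-(β * x₀ / 2) * k ^ 2)) := by gcongr
    _ = _ := by rw [rpow_natCast]; ring

lemma norm_integral_fourier_le {β x₀ : ℝ} {F : ℝ → ℝ} (hβ : 0 < β) (hF : ∀ k, β * k ^ 2 ≤ F k)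
    (hx₀ : 0 < x₀) (m ℓ : ℕ) (x₁ : ℝ) :
    ‖∫ k : ℝ, (2 * (π : ℂ) * Complex.I * (k : ℂ)) ^ ℓ * ((F k : ℝ) : ℂ) ^ m
        * Complex.exp ((-(F k * x₀) : ℝ) : ℂ)
        * Complex.exp (2 * (π : ℂ) * Complex.I * (k : ℂ) * (x₁ : ℂ))‖
      ≤ (2 * π) ^ ℓ * m ! * 2 ^ m * (β / 2) ^ (-((ℓ : ℝ) + 1) / 2) * Gamma (((ℓ : ℝ) + 1) / 2)
        * x₀ ^ (-((m : ℝ) + ((ℓ : ℝ) + 1) / 2)) := by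
  have hb : 0 < β * x₀ / 2 := by positivity
  have hℓ : -1 < (ℓ : ℝ) := by linarith [ℓ.cast_nonneg (α := ℝ)]
  calc _ ≤ ∫ k : ℝ, (2 * π) ^ ℓ * (m ! * (2 / x₀) ^ m)
          * (|k| ^ (ℓ : ℝ) * exp (-(β * x₀ / 2) * k ^ 2)) :=
        norm_integral_le_of_norm_le ((integrable_abs_rpow_mul_exp_neg_mul_sq hℓ hb).const_mul _)
          (.of_forall fun k => norm_fourier_integrand_le k x₁ hβ.le (hF k) hx₀ m ℓ)
    _ = (2 * π) ^ ℓ * (m ! * (2 / x₀) ^ m)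
          * ((β * x₀ / 2) ^ (-((ℓ : ℝ) + 1) / 2) * Gamma (((ℓ : ℝ) + 1) / 2)) := by
        rw [integral_const_mul, integral_abs_rpow_mul_exp_neg_mul_sq hℓ hb]
    _ = _ := by
        rw [show -((m : ℝ) + ((ℓ : ℝ) + 1) / 2) = -m + -((ℓ : ℝ) + 1) / 2 by ring, rpow_add hx₀,
          rpow_neg hx₀.le, rpow_natCast, mul_div_right_comm β, mul_rpow (by positivity) hx₀.le]
        ring

theorem stmt1_general (Q : Polynomial ℝ)
    (hzero : Q.eval 0 = 0) (hpos : ∀ r : ℝ, r ≠ 0 → 0 < Q.eval r)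
    (hcoeff : Q.coeff 2 = 1) (m ℓ : ℕ) :
    ∃ C : ℝ, 0 < C ∧ ∀ ε : ℝ, ε ∈ Set.Ioc (0:ℝ) 1 → ∀ x₀ : ℝ, 0 < x₀ → ∀ x₁ : ℝ,
      ‖∫ k : ℝ, (2 * (π : ℂ) * Complex.I * (k : ℂ)) ^ ℓ
          * (((ε ^ 2)⁻¹ * Q.eval (2 * π * ε * k) : ℝ) : ℂ) ^ m
          * Complex.exp ((-((ε ^ 2)⁻¹ * Q.eval (2 * π * ε * k) * x₀) : ℝ) : ℂ)
          * Complex.exp (2 * (π : ℂ) * Complex.I * (k : ℂ) * (x₁ : ℂ))‖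
        ≤ C * x₀ ^ (-((m : ℝ) + ((ℓ : ℝ) + 1) / 2)) := by
  obtain ⟨c, hc, hQ⟩ := Q.exists_pos_mul_sq_le_eval hzero hpos (hcoeff ▸ one_pos)
  refine ⟨_, by positivity, fun ε hε x₀ hx₀ x₁ =>
    norm_integral_fourier_le (β := 4 * π ^ 2 * c) (by positivity) (fun k => ?_) hx₀ m ℓ x₁⟩
  have hε₀ : ε ≠ 0 := hε.1.ne'
  calc 4 * π ^ 2 * c * k ^ 2 = (ε ^ 2)⁻¹ * (c * (2 * π * ε * k) ^ 2) := by field_simp; ring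
    _ ≤ (ε ^ 2)⁻¹ * Q.eval (2 * π * ε * k) := by gcongr; exact hQ _

/-- Time-direction estimate from the proof of Proposition 2.1:
for an even positive polynomial `Q` of degree `2n ≥ 4` with `Q(0) = 0` and quadratic
coefficient `1`, and any `m, ℓ ∈ ℕ`, there is `C > 0` (depending only on `Q, m, ℓ`)
such that for all `ε ∈ (0,1]`, `x₀ > 0`, `x₁ ∈ ℝ`, the Fourier integral is bounded by
`C x₀^{-m-(ℓ+1)/2}`. -/
theorem stmt1 (Q : Polynomial ℝ) (n : ℕ) (hn : 2 ≤ n) (hdeg : Q.natDegree = 2 * n)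
    (heven : ∀ r : ℝ, Q.eval (-r) = Q.eval r)
    (hzero : Q.eval 0 = 0) (hpos : ∀ r : ℝ, r ≠ 0 → 0 < Q.eval r)
    (hcoeff : Q.coeff 2 = 1) (m ℓ : ℕ) :
    ∃ C : ℝ, 0 < C ∧ ∀ ε : ℝ, ε ∈ Set.Ioc (0:ℝ) 1 → ∀ x₀ : ℝ, 0 < x₀ → ∀ x₁ : ℝ,
      ‖∫ k : ℝ, (2 * (π : ℂ) * Complex.I * (k : ℂ)) ^ ℓ
          * (((ε ^ 2)⁻¹ * Q.eval (2 * π * ε * k) : ℝ) : ℂ) ^ m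
          * Complex.exp ((-((ε ^ 2)⁻¹ * Q.eval (2 * π * ε * k) * x₀) : ℝ) : ℂ)
          * Complex.exp (2 * (π : ℂ) * Complex.I * (k : ℂ) * (x₁ : ℂ))‖
        ≤ C * x₀ ^ (-((m : ℝ) + ((ℓ : ℝ) + 1) / 2)) :=
  stmt1_general Q hzero hpos hcoeff m ℓ
end

section
/- For every p ≥ 2 there exists a constant c_p > 0, depending only on p, with the following property. Let (Ω,ℙ) be a probability space, (U,𝒰,μ) a σ-finite measure space, T : U × Ω → Ω a measurable map, and for measurable F : Ω → ℝ write (D_u F)(ω) = F(T(u,ω)) − F(ω). Then for every measurable F : Ω → ℝ with 𝔼|F|^p < ∞ one has 𝔼 ∫_U ( |F(T(u,·))|^{p/2} − |F|^{p/2} )² dμ(u) ≤ c_p ( 𝔼 ∫_U |D_u F|^p dμ(u) + 𝔼 ( ∫_U (D_u F)² dμ(u) )^{p/2} ) + (1/2) 𝔼 |F|^p, where both sides are interpreted as values in [0,∞]. -/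
/-!
With `s = p / 2` and `D = a - b`, the mean value theorem bounds `| |a|^s - |b|^s |` by
`s (|b| + |D|)^(s-1) |D|`, so its square is at most a multiple of `|D|^p + |b|^(p-2) D²`.
Taking `a = F (T (u, ω))`, `b = F ω` and integrating in `u`, the mixed term
`|F ω|^(p-2) ∫ D² dμ` is split by a Young-type inequality into `½ |F ω|^p` plus a multiple of
`(∫ D² dμ)^(p/2)`; integrating in `ω` gives the claim.
-/

open MeasureTheory Set
open scoped ENNReal

theorem Real.abs_rpow_sub_rpow_le {s M x y : ℝ} (hs : 1 ≤ s) (hx : x ∈ Icc 0 M)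
    (hy : y ∈ Icc 0 M) : |x ^ s - y ^ s| ≤ s * M ^ (s - 1) * |x - y| := by
  have hderiv : ∀ z ∈ Icc 0 M, ‖deriv (fun x : ℝ => x ^ s) z‖ ≤ s * M ^ (s - 1) := by
    intro z hz
    rw [Real.deriv_rpow_const, Real.norm_eq_abs,
      abs_of_nonneg (mul_nonneg (by linarith) (Real.rpow_nonneg hz.1 _))]
    gcongr <;> linarith [hz.1, hz.2]
  simpa only [Real.norm_eq_abs] using (convex_Icc 0 M).norm_image_sub_le_of_norm_deriv_le
    (fun z _ => Real.differentiable_rpow_const hs z) hderiv hy hx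

theorem Real.add_rpow_le_two_rpow_mul_add_rpow {x y q : ℝ} (hx : 0 ≤ x) (hy : 0 ≤ y)
    (hq : 0 ≤ q) : (x + y) ^ q ≤ 2 ^ q * (x ^ q + y ^ q) := by
  have hmax : max x y ^ q ≤ x ^ q + y ^ q := by
    rcases max_choice x y with h | h <;> rw [h] <;>
      linarith [Real.rpow_nonneg hx q, Real.rpow_nonneg hy q]
  calc (x + y) ^ q ≤ (2 * max x y) ^ q := by
        gcongr
        linarith [le_max_left x y, le_max_right x y]
    _ = 2 ^ q * max x y ^ q := Real.mul_rpow zero_le_two (le_max_of_le_left hx)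
    _ ≤ 2 ^ q * (x ^ q + y ^ q) := by gcongr

/-- Young's inequality with exponents `p / (p - 2)` and `p / 2`, in a form that stays valid at
`p = 2`. -/
theorem Real.rpow_sub_two_mul_le {p ε x y : ℝ} (hp : 2 ≤ p) (hε : 0 < ε) (hx : 0 ≤ x)
    (hy : 0 ≤ y) : x ^ (p - 2) * y ≤ x ^ p / ε + ε ^ (p / 2 - 1) * y ^ (p / 2) := by
  rcases le_or_gt y (x ^ 2 / ε) with h | h
  · calc x ^ (p - 2) * y ≤ x ^ (p - 2) * (x ^ 2 / ε) := by gcongr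
      _ = x ^ p / ε := by
        rw [mul_div_assoc', ← Real.rpow_add_natCast' hx (by push_cast; linarith)]
        push_cast; ring_nf
      _ ≤ _ := le_add_of_nonneg_right (by positivity)
  · have hxy : x ^ 2 < ε * y := by rwa [div_lt_iff₀' hε] at h
    have hy0 : 0 < y := pos_of_mul_pos_right ((sq_nonneg x).trans_lt hxy) hε.le
    have hxp : x ^ (p - 2) ≤ ε ^ (p / 2 - 1) * y ^ (p / 2 - 1) := by
      calc x ^ (p - 2) = (x ^ 2) ^ (p / 2 - 1) := by
            rw [← Real.rpow_natCast, ← Real.rpow_mul hx]; push_cast; ring_nf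
        _ ≤ (ε * y) ^ (p / 2 - 1) := by gcongr; linarith
        _ = ε ^ (p / 2 - 1) * y ^ (p / 2 - 1) := Real.mul_rpow hε.le hy
    calc x ^ (p - 2) * y ≤ ε ^ (p / 2 - 1) * y ^ (p / 2 - 1) * y := by gcongr
      _ = ε ^ (p / 2 - 1) * y ^ (p / 2) := by
        rw [mul_assoc, Real.rpow_sub_one hy0.ne', div_mul_cancel₀ _ hy0.ne']
      _ ≤ _ := le_add_of_nonneg_left (by positivity)

theorem ENNReal.ofReal_rpow_sub_two_mul_le {p ε x : ℝ} (hp : 2 ≤ p) (hε : 0 < ε) (hx : 0 ≤ x)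
    (Y : ℝ≥0∞) :
    ENNReal.ofReal (x ^ (p - 2)) * Y ≤
      ENNReal.ofReal (x ^ p / ε) + ENNReal.ofReal (ε ^ (p / 2 - 1)) * Y ^ (p / 2) := by
  rcases eq_or_ne Y ⊤ with rfl | hY
  · rw [ENNReal.top_rpow_of_pos (by linarith),
      ENNReal.mul_top (ENNReal.ofReal_pos.2 (Real.rpow_pos_of_pos hε _)).ne']
    exact le_top.trans_eq (add_top _).symm
  · rw [← ENNReal.ofReal_toReal hY, ENNReal.ofReal_rpow_of_nonneg ENNReal.toReal_nonneg
        (by linarith), ← ENNReal.ofReal_mul (by positivity), ← ENNReal.ofReal_mul (by positivity),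
      ← ENNReal.ofReal_add (by positivity) (by positivity)]
    exact ENNReal.ofReal_le_ofReal (Real.rpow_sub_two_mul_le hp hε hx ENNReal.toReal_nonneg)

noncomputable def rpowDiffConst (p : ℝ) : ℝ := (p / 2) ^ 2 * 2 ^ (p - 2)

theorem rpowDiffConst_pos {p : ℝ} (hp : 2 ≤ p) : 0 < rpowDiffConst p := by
  unfold rpowDiffConst
  have : 0 < p := by linarith
  positivity

noncomputable def differenceBoundConst (p : ℝ) : ℝ :=
  max (rpowDiffConst p) (rpowDiffConst p * (2 * rpowDiffConst p) ^ (p / 2 - 1))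

theorem differenceBoundConst_pos {p : ℝ} (hp : 2 ≤ p) : 0 < differenceBoundConst p :=
  lt_max_of_lt_left (rpowDiffConst_pos hp)

theorem sq_abs_rpow_half_sub_le {p : ℝ} (hp : 2 ≤ p) (a b : ℝ) :
    (|a| ^ (p / 2) - |b| ^ (p / 2)) ^ 2 ≤
      rpowDiffConst p * (|a - b| ^ p + |b| ^ (p - 2) * (a - b) ^ 2) := by
  set M := |b| + |a - b|
  have hmv : |(|a|) ^ (p / 2) - |b| ^ (p / 2)| ≤ p / 2 * M ^ (p / 2 - 1) * |a - b| := by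
    refine (Real.abs_rpow_sub_rpow_le (M := M) (by linarith) ⟨abs_nonneg a, ?_⟩
      ⟨abs_nonneg b, le_add_of_nonneg_right (abs_nonneg (a - b))⟩).trans ?_
    · linarith [abs_sub_abs_le_abs_sub a b]
    · have : 0 < p := by linarith
      exact mul_le_mul_of_nonneg_left (abs_abs_sub_abs_le_abs_sub a b) (by positivity)
  have hM : (M ^ (p / 2 - 1)) ^ 2 = M ^ (p - 2) := by
    rw [← Real.rpow_mul_natCast (by positivity)]; push_cast; ring_nf
  have hpow : |a - b| ^ (p - 2) * (a - b) ^ 2 = |a - b| ^ p := by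
    rw [← sq_abs, ← Real.rpow_add_natCast' (abs_nonneg _) (by push_cast; linarith)]
    push_cast; ring_nf
  calc (|a| ^ (p / 2) - |b| ^ (p / 2)) ^ 2
      ≤ (p / 2 * M ^ (p / 2 - 1) * |a - b|) ^ 2 := by
        rw [← sq_abs]; gcongr
    _ = (p / 2) ^ 2 * M ^ (p - 2) * (a - b) ^ 2 := by rw [mul_pow, mul_pow, hM, sq_abs]
    _ ≤ (p / 2) ^ 2 * (2 ^ (p - 2) * (|b| ^ (p - 2) + |a - b| ^ (p - 2))) * (a - b) ^ 2 := by
        gcongr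
        exact Real.add_rpow_le_two_rpow_mul_add_rpow (abs_nonneg _) (abs_nonneg _)
          (by linarith)
    _ = rpowDiffConst p * (|a - b| ^ p + |b| ^ (p - 2) * (a - b) ^ 2) := by
        rw [rpowDiffConst, ← hpow]; ring

theorem lintegral_sq_abs_rpow_half_sub_le {U : Type*} [MeasurableSpace U] (μ : Measure U)
    {p : ℝ} (hp : 2 ≤ p) {g : U → ℝ} (hg : Measurable g) (b : ℝ) :
    ∫⁻ u, ENNReal.ofReal ((|g u| ^ (p / 2) - |b| ^ (p / 2)) ^ 2) ∂μ ≤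
      ENNReal.ofReal (differenceBoundConst p) *
        (∫⁻ u, ENNReal.ofReal (|g u - b| ^ p) ∂μ +
          (∫⁻ u, ENNReal.ofReal ((g u - b) ^ 2) ∂μ) ^ (p / 2)) +
      1 / 2 * ENNReal.ofReal (|b| ^ p) := by
  set K := rpowDiffConst p
  have hK : 0 < K := rpowDiffConst_pos hp
  set A := ∫⁻ u, ENNReal.ofReal (|g u - b| ^ p) ∂μ
  set Y := ∫⁻ u, ENNReal.ofReal ((g u - b) ^ 2) ∂μ
  -- `ε = 2 K` turns `K |b|^(p-2) Y` into `½ |b|^p + K (2K)^(p/2-1) Y^(p/2)`.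
  have hsplit := ENNReal.ofReal_rpow_sub_two_mul_le hp (by positivity : 0 < 2 * K)
    (abs_nonneg b) Y
  calc ∫⁻ u, ENNReal.ofReal ((|g u| ^ (p / 2) - |b| ^ (p / 2)) ^ 2) ∂μ
      ≤ ∫⁻ u, ENNReal.ofReal K * (ENNReal.ofReal (|g u - b| ^ p) +
          ENNReal.ofReal (|b| ^ (p - 2)) * ENNReal.ofReal ((g u - b) ^ 2)) ∂μ := by
        refine lintegral_mono fun u => ?_
        rw [← ENNReal.ofReal_mul (by positivity), ← ENNReal.ofReal_add (by positivity)
          (by positivity), ← ENNReal.ofReal_mul hK.le]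
        exact ENNReal.ofReal_le_ofReal (sq_abs_rpow_half_sub_le hp (g u) b)
    _ = ENNReal.ofReal K * (A + ENNReal.ofReal (|b| ^ (p - 2)) * Y) := by
        rw [lintegral_const_mul' _ _ ENNReal.ofReal_ne_top, lintegral_add_left (by fun_prop),
          lintegral_const_mul' _ _ ENNReal.ofReal_ne_top]
    _ ≤ ENNReal.ofReal K * (A + (ENNReal.ofReal (|b| ^ p / (2 * K)) +
          ENNReal.ofReal ((2 * K) ^ (p / 2 - 1)) * Y ^ (p / 2))) := by gcongr
    _ = ENNReal.ofReal K * A + ENNReal.ofReal (K * (2 * K) ^ (p / 2 - 1)) * Y ^ (p / 2) +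
          1 / 2 * ENNReal.ofReal (|b| ^ p) := by
        have hhalf : ENNReal.ofReal K * ENNReal.ofReal (|b| ^ p / (2 * K)) =
            1 / 2 * ENNReal.ofReal (|b| ^ p) := by
          rw [← ENNReal.ofReal_mul hK.le, show K * (|b| ^ p / (2 * K)) = 1 / 2 * |b| ^ p by
            field_simp, ENNReal.ofReal_mul (by norm_num), ENNReal.ofReal_div_of_pos two_pos,
            ENNReal.ofReal_one, ENNReal.ofReal_ofNat]
        rw [mul_add, mul_add, hhalf, ← mul_assoc, ← ENNReal.ofReal_mul hK.le]
        ring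
    _ ≤ _ := by
        rw [mul_add, differenceBoundConst, ENNReal.ofReal_max]
        gcongr
        · exact le_max_left _ _
        · exact le_max_right _ _

/-- Lemma 3.2 of the paper. For every `p ≥ 2` there is `c_p > 0`,
depending only on `p`, such that for any probability space `(Ω, P)`, any σ-finite
measure space `(U, μ)`, any measurable `T : U × Ω → Ω` (with the difference operator
`(D_u F)(ω) = F(T(u,ω)) − F(ω)`), and any measurable `F : Ω → ℝ` with `𝔼|F|^p < ∞`,
one has
`𝔼 ∫_U (|F ∘ T_u|^{p/2} − |F|^{p/2})² dμ
  ≤ c_p (𝔼 ∫_U |D_u F|^p dμ + 𝔼 (∫_U (D_u F)² dμ)^{p/2}) + (1/2) 𝔼 |F|^p`,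
with both sides interpreted in `[0,∞]`. -/
theorem stmt3 (p : ℝ) (hp : 2 ≤ p) :
    ∃ c : ℝ, 0 < c ∧
      ∀ (Ω U : Type) [MeasurableSpace Ω] [MeasurableSpace U]
        (P : Measure Ω) (μ : Measure U),
        IsProbabilityMeasure P → SigmaFinite μ →
        ∀ T : U × Ω → Ω, Measurable T →
        ∀ F : Ω → ℝ, Measurable F →
        (∫⁻ ω, ENNReal.ofReal (|F ω| ^ p) ∂P) < ⊤ →
        (∫⁻ ω, (∫⁻ u, ENNReal.ofReal
              ((|F (T (u, ω))| ^ (p / 2) - |F ω| ^ (p / 2)) ^ 2) ∂μ) ∂P)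
          ≤ ENNReal.ofReal c *
              ((∫⁻ ω, ∫⁻ u, ENNReal.ofReal (|F (T (u, ω)) - F ω| ^ p) ∂μ ∂P)
                + ∫⁻ ω, (∫⁻ u, ENNReal.ofReal ((F (T (u, ω)) - F ω) ^ 2) ∂μ) ^ (p / 2) ∂P)
            + (1 / 2) * ∫⁻ ω, ENNReal.ofReal (|F ω| ^ p) ∂P := by
  refine ⟨differenceBoundConst p, differenceBoundConst_pos hp, ?_⟩
  intro Ω U _ _ P μ _ _ T hT F hF _
  have hA : Measurable fun ω => ∫⁻ u, ENNReal.ofReal (|F (T (u, ω)) - F ω| ^ p) ∂μ :=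
    Measurable.lintegral_prod_right' (f := fun q : Ω × U =>
      ENNReal.ofReal (|F (T (q.2, q.1)) - F q.1| ^ p)) (by fun_prop)
  calc _ ≤ ∫⁻ ω, _ ∂P := lintegral_mono fun ω =>
        lintegral_sq_abs_rpow_half_sub_le μ hp (g := fun u => F (T (u, ω))) (by fun_prop) (F ω)
    _ = _ := by
        rw [lintegral_add_right _ (by fun_prop), lintegral_const_mul' _ _ ENNReal.ofReal_ne_top,
          lintegral_add_left hA, lintegral_const_mul _ (by fun_prop)]
end

section
/- For every p ≥ 2 there exists a constant C_p > 0, depending only on p, with the following property. Let (Ω,ℙ) be a probability space, (U,𝒰,μ) a σ-finite measure space, T : U × Ω → Ω a measurable map, and for measurable F : Ω → ℝ write (D_u F)(ω) = F(T(u,ω)) − F(ω). Assume the L² spectral gap inequality: for every measurable G : Ω → ℝ with 𝔼|G| < ∞ one has 𝔼[G²] ≤ (𝔼 G)² + 𝔼 ∫_U (D_u G)² dμ(u) (with both sides in [0,∞]). Then for every measurable F : Ω → ℝ with 𝔼|F| < ∞ one has ‖F‖_{L^p(ℙ)} ≤ C_p ( |𝔼 F| + ‖ ω ↦ ‖ u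 ↦ (D_u F)(ω) ‖_{L²(μ)} ‖_{L^p(ℙ)} + ‖ ω ↦ ‖ u ↦ (D_u F)(ω) ‖_{L^p(μ)} ‖_{L^p(ℙ)} ). -/
open MeasureTheory

lemma aux_rpow_sub_le {m a b : ℝ} (hm : 1 ≤ m) (hb : 0 ≤ b) (hba : b ≤ a) :
    a ^ m - b ^ m ≤ m * a ^ (m - 1) * (a - b) := by
  have ha : 0 ≤ a := hb.trans hba
  have key : ‖a ^ m - b ^ m‖ ≤ (m * a ^ (m - 1)) * ‖a - b‖ := by
    have := Convex.norm_image_sub_le_of_norm_hasDerivWithin_le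
      (f := fun x : ℝ => x ^ m) (f' := fun x : ℝ => m * x ^ (m - 1)) (s := Set.Icc 0 a)
      (C := m * a ^ (m - 1))
      (fun x hx => (Real.hasDerivAt_rpow_const (Or.inr hm)).hasDerivWithinAt)
      (fun x hx => by
        have h1 : 0 ≤ x ^ (m - 1) := Real.rpow_nonneg hx.1 _
        have h2 : x ^ (m - 1) ≤ a ^ (m - 1) := Real.rpow_le_rpow hx.1 hx.2 (by linarith)
        rw [Real.norm_eq_abs, abs_mul, abs_of_nonneg (by linarith : (0:ℝ) ≤ m),
          abs_of_nonneg h1]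
        exact mul_le_mul_of_nonneg_left h2 (by linarith))
      (convex_Icc 0 a) (Set.mem_Icc.2 ⟨hb, hba⟩) (Set.mem_Icc.2 ⟨ha, le_refl a⟩)
    exact this
  calc a ^ m - b ^ m ≤ |a ^ m - b ^ m| := le_abs_self _
    _ ≤ m * a ^ (m - 1) * |a - b| := key
    _ = m * a ^ (m - 1) * (a - b) := by rw [abs_of_nonneg (by linarith)]

lemma aux_min_lip (x y r : ℝ) : |min x r - min y r| ≤ |x - y| := by
  rcases le_total x r with h1 | h1 <;> rcases le_total y r with h2 | h2 <;>
    simp only [min_eq_left, min_eq_right, h1, h2] <;>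
    (rcases abs_cases (x - y) with h | h <;> rw [abs_sub_le_iff] <;>
      constructor <;> linarith [h.1, h.2])

lemma aux_key {p M x y : ℝ} (hp : 2 < p) (hM : 0 ≤ M) :
    ((min |y| M) ^ (p/2) - (min |x| M) ^ (p/2)) ^ 2
      ≤ (p^2/4 * 2^(p-1)) * ((min |x| M) ^ (p-2) * (y - x) ^ 2 + |y - x| ^ p) := by
  set a := min |y| M with ha_def
  set b := min |x| M with hb_def
  set d := |y - x| with hd_def
  set m := p / 2 with hm_def
  have hm : 1 < m := by rw [hm_def]; linarith
  have ha : 0 ≤ a := le_min (abs_nonneg _) hM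
  have hb : 0 ≤ b := le_min (abs_nonneg _) hM
  have hd : 0 ≤ d := abs_nonneg _
  have hbd : 0 ≤ b + d := by linarith
  -- |a - b| ≤ d
  have hab : |a - b| ≤ d := by
    refine (aux_min_lip |y| |x| M).trans ?_
    exact (abs_abs_sub_abs_le_abs_sub y x).trans (le_of_eq rfl)
  -- step 1 : |a^m - b^m| ≤ m * (max a b)^(m-1) * |a-b|
  have step1 : |a ^ m - b ^ m| ≤ m * (max a b) ^ (m - 1) * |a - b| := by
    rcases le_total b a with h | h
    · rw [abs_of_nonneg (by
        have := Real.rpow_le_rpow hb h (by linarith : (0:ℝ) ≤ m); linarith),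
        max_eq_left h, abs_of_nonneg (by linarith)]
      exact aux_rpow_sub_le hm.le hb h
    · rw [abs_sub_comm, abs_of_nonneg (by
        have := Real.rpow_le_rpow ha h (by linarith : (0:ℝ) ≤ m); linarith),
        max_eq_right h, abs_sub_comm, abs_of_nonneg (by linarith)]
      exact aux_rpow_sub_le hm.le ha h
  -- step 2 : max a b ≤ b + d
  have step2 : max a b ≤ b + d := by
    rcases abs_cases (a - b) with h | h <;>
      [exact max_le (by linarith) (by linarith); exact max_le (by linarith) (by linarith)]
  -- t1
  have hmax : 0 ≤ max a b := le_max_of_le_right hb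
  have t1 : |a ^ m - b ^ m| ≤ m * (b + d) ^ (m - 1) * d := by
    refine step1.trans ?_
    have h1 : (max a b) ^ (m-1) ≤ (b + d) ^ (m-1) := Real.rpow_le_rpow hmax step2 (by linarith)
    have hm0 : (0:ℝ) ≤ m := by linarith
    exact mul_le_mul (mul_le_mul_of_nonneg_left h1 hm0) hab (abs_nonneg _) (by positivity)
  have t2 : (a ^ m - b ^ m) ^ 2 ≤ m ^ 2 * ((b + d) ^ (m - 1)) ^ 2 * d ^ 2 := by
    have h := pow_le_pow_left₀ (abs_nonneg (a ^ m - b ^ m)) t1 2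
    rw [sq_abs] at h
    calc (a^m - b^m)^2 ≤ (m * (b+d)^(m-1) * d)^2 := h
      _ = m^2 * ((b+d)^(m-1))^2 * d^2 := by ring
  have hsq : ∀ c : ℝ, 0 ≤ c → (c ^ (m-1))^2 = c ^ (p-2) := by
    intro c hc
    rw [← Real.rpow_natCast (c ^ (m-1)) 2, ← Real.rpow_mul hc]
    congr 1
    push_cast
    rw [hm_def]; ring
  have step3 : (b + d) ^ (m - 1) ≤ 2 ^ (m-1) * (b ^ (m-1) + d ^ (m-1)) := by
    have hbpow : 0 ≤ b ^ (m-1) := Real.rpow_nonneg hb _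
    have hdpow : 0 ≤ d ^ (m-1) := Real.rpow_nonneg hd _
    have h1 : b + d ≤ 2 * max b d := by
      rcases le_total b d with h | h
      · rw [max_eq_right h]; linarith
      · rw [max_eq_left h]; linarith
    have hmaxbd : 0 ≤ max b d := le_max_of_le_left hb
    calc (b+d)^(m-1) ≤ (2 * max b d)^(m-1) := Real.rpow_le_rpow hbd h1 (by linarith)
      _ = 2^(m-1) * (max b d)^(m-1) := Real.mul_rpow (by norm_num) hmaxbd
      _ ≤ 2^(m-1) * (b^(m-1) + d^(m-1)) := by
          refine mul_le_mul_of_nonneg_left ?_ (Real.rpow_nonneg (by norm_num) _)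
          rcases le_total b d with h | h
          · rw [max_eq_right h]; linarith
          · rw [max_eq_left h]; linarith
  have t3 : ((b + d) ^ (m - 1)) ^ 2 ≤ 2 ^ (p - 1) * (b ^ (p-2) + (d ^ (m-1))^2) := by
    have h := pow_le_pow_left₀ (Real.rpow_nonneg hbd _) step3 2
    have h2 : ((2:ℝ)^(m-1))^2 = (2:ℝ)^(p-2) := hsq 2 (by norm_num)
    have hbpow : 0 ≤ b ^ (m-1) := Real.rpow_nonneg hb _
    have hdpow : 0 ≤ d ^ (m-1) := Real.rpow_nonneg hd _
    have h3 : (2:ℝ)^(p-2) * 2 = 2^(p-1) := by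
      rw [show (2:ℝ)^(p-1) = 2^((p-2)+1) by ring_nf,
        Real.rpow_add (by norm_num : (0:ℝ) < 2), Real.rpow_one]
    calc ((b+d)^(m-1))^2 ≤ (2^(m-1) * (b^(m-1) + d^(m-1)))^2 := h
      _ = ((2:ℝ)^(m-1))^2 * (b^(m-1) + d^(m-1))^2 := by ring
      _ ≤ ((2:ℝ)^(m-1))^2 * (2 * ((b^(m-1))^2 + (d^(m-1))^2)) := by
          refine mul_le_mul_of_nonneg_left ?_ (sq_nonneg _)
          nlinarith [sq_nonneg (b^(m-1) - d^(m-1))]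
      _ = (2:ℝ)^(p-2) * 2 * ((b^(m-1))^2 + (d^(m-1))^2) := by rw [h2]; ring
      _ = 2^(p-1) * (b ^ (p-2) + (d^(m-1))^2) := by rw [h3, hsq b hb]
  have hd2 : (d ^ (m-1))^2 * d^2 = d ^ p := by
    rw [hsq d hd, ← Real.rpow_natCast d 2,
      ← Real.rpow_add_of_nonneg hd (by linarith) (by norm_num)]
    norm_num
  have hfin : 0 ≤ ((b+d)^(m-1))^2 := sq_nonneg _
  calc (a^m - b^m)^2 ≤ m^2 * ((b+d)^(m-1))^2 * d^2 := t2
    _ ≤ m^2 * (2^(p-1) * (b^(p-2) + (d^(m-1))^2)) * d^2 := by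
        exact mul_le_mul_of_nonneg_right (mul_le_mul_of_nonneg_left t3 (sq_nonneg m))
          (sq_nonneg d)
    _ = p^2/4 * 2^(p-1) * (b^(p-2) * d^2 + (d^(m-1))^2 * d^2) := by rw [hm_def]; ring
    _ = p^2/4 * 2^(p-1) * (b^(p-2) * (y-x)^2 + d^p) := by rw [hd2, hd_def, sq_abs]

lemma aux_wrap {p K l s : ℝ} (hp : 2 < p) (hK : 1 ≤ K) (hl : 0 ≤ l) (hs : 0 ≤ s)
    (h : l ≤ s ^ (p/(p-1)) * l ^ ((p-2)/(p-1)) + K * s ^ (2:ℝ) * l ^ ((p-2)/p) + K * s ^ p) :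
    l ≤ (1 + 2*K) ^ (p-1) * s ^ p := by
  have hp1 : (0:ℝ) < p - 1 := by linarith
  have hp0 : (0:ℝ) < p := by linarith
  have hC1 : (1:ℝ) ≤ (1 + 2*K) ^ (p-1) := by
    calc (1:ℝ) = 1 ^ (p-1) := (Real.one_rpow _).symm
      _ ≤ (1 + 2*K) ^ (p-1) := Real.rpow_le_rpow zero_le_one (by linarith) (by linarith)
  rcases eq_or_lt_of_le hs with hs0 | hs0
  · rw [← hs0, Real.zero_rpow (by positivity : p/(p-1) ≠ 0),
      Real.zero_rpow (by norm_num : (2:ℝ) ≠ 0), Real.zero_rpow hp0.ne'] at h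
    rw [← hs0, Real.zero_rpow hp0.ne']
    simp only [zero_mul, mul_zero, add_zero, zero_add] at h ⊢
    linarith
  · have hsp : (0:ℝ) < s ^ p := Real.rpow_pos_of_pos hs0 _
    set t := l / s ^ p with ht_def
    have ht0 : 0 ≤ t := div_nonneg hl hsp.le
    have hlt : l = t * s ^ p := (div_mul_cancel₀ l hsp.ne').symm
    set α := (p-2)/(p-1) with hα_def
    set β := (p-2)/p with hβ_def
    have hα0 : 0 ≤ α := div_nonneg (by linarith) (by linarith)
    have hβ0 : 0 ≤ β := div_nonneg (by linarith) (by linarith)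
    have key : t ≤ t ^ α + K * t ^ β + K := by
      have e1 : s ^ (p/(p-1)) * l ^ α = t ^ α * s ^ p := by
        rw [hlt, Real.mul_rpow ht0 hsp.le, ← Real.rpow_mul hs]
        rw [← mul_assoc, mul_comm (s ^ (p/(p-1))), mul_assoc, ← Real.rpow_add hs0]
        congr 2
        rw [hα_def]; field_simp; try ring
      have e2 : K * s ^ (2:ℝ) * l ^ β = K * t ^ β * s ^ p := by
        rw [hlt, Real.mul_rpow ht0 hsp.le, ← Real.rpow_mul hs]
        rw [mul_assoc, mul_assoc, mul_comm (s ^ (2:ℝ)), mul_assoc, ← Real.rpow_add hs0]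
        congr 2
        rw [hβ_def]; field_simp; try ring
      rw [e1, e2, hlt] at h
      have h' : t * s ^ p ≤ (t ^ α + K * t ^ β + K) * s ^ p := by
        calc t * s ^ p ≤ t ^ α * s ^ p + K * t ^ β * s ^ p + K * s ^ p := h
          _ = (t ^ α + K * t ^ β + K) * s ^ p := by ring
      exact le_of_mul_le_mul_right h' hsp
    have htb : t ≤ (1 + 2*K) ^ (p-1) := by
      rcases le_or_gt t 1 with ht1 | ht1
      · exact ht1.trans hC1
      · have ht0' : (0:ℝ) < t := by linarith
        have hβα : β ≤ α := by
          rw [hα_def, hβ_def]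
          apply div_le_div_of_nonneg_left (by linarith) hp1 (by linarith)
        have h1 : t ^ β ≤ t ^ α := Real.rpow_le_rpow_of_exponent_le ht1.le hβα
        have h2 : (1:ℝ) ≤ t ^ α := Real.one_le_rpow ht1.le hα0
        have key2 : t ≤ (1 + 2*K) * t ^ α := by nlinarith
        have hγ : t ^ α * t ^ (1 - α) = t := by
          rw [← Real.rpow_add ht0']; norm_num
        have h3 : t ^ (1 - α) ≤ 1 + 2*K := by
          have := key2
          rw [← hγ] at this
          have htα : (0:ℝ) < t ^ α := Real.rpow_pos_of_pos ht0' _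
          nlinarith
        have h1α : 1 - α = 1/(p-1) := by rw [hα_def]; field_simp; norm_num
        calc t = (t ^ (1/(p-1))) ^ (p-1) := by
              rw [← Real.rpow_mul ht0'.le, one_div, inv_mul_cancel₀ hp1.ne', Real.rpow_one]
          _ ≤ (1 + 2*K) ^ (p-1) := Real.rpow_le_rpow (Real.rpow_nonneg ht0'.le _)
              (h1α ▸ h3) hp1.le
    calc l = t * s ^ p := hlt
      _ ≤ (1 + 2*K) ^ (p-1) * s ^ p := mul_le_mul_of_nonneg_right htb hsp.le

open ENNReal in
lemma aux_jensen {Ω : Type} [MeasurableSpace Ω] {P : Measure Ω} [IsProbabilityMeasure P]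
    {f : Ω → ℝ≥0∞} (hf : AEMeasurable f P) {r : ℝ} (hr : 1 < r) :
    ∫⁻ ω, f ω ∂P ≤ (∫⁻ ω, (f ω) ^ r ∂P) ^ (1/r) := by
  have hr0 : (0:ℝ) < r := by linarith
  have hr1 : r - 1 ≠ 0 := by intro h; nlinarith
  have hconj : Real.HolderConjugate r (r/(r-1)) := (Real.holderConjugate_iff_eq_conjExponent hr).2 rfl
  have h := ENNReal.lintegral_mul_le_Lp_mul_Lq P hconj hf
    (aemeasurable_const : AEMeasurable (fun _ : Ω => (1:ℝ≥0∞)) P)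
  simpa [measure_univ] using h


open ENNReal in
/-- Proposition 3.3 of the paper, the `L^p` spectral gap inequality.
For every `p ≥ 2` there is `C_p > 0` depending only on `p` such that: for any probability
space `(Ω, P)`, σ-finite measure space `(U, μ)`, measurable `T : U × Ω → Ω` (defining the
difference operator `(D_u F)(ω) = F(T(u,ω)) − F(ω)`), if the `L²` spectral gap inequality
`𝔼[G²] ≤ (𝔼 G)² + 𝔼 ∫ (D_u G)² dμ` holds for all measurable integrable `G`, then for
every measurable `F` with `𝔼|F| < ∞`,
`‖F‖_{L^p} ≤ C_p (|𝔼 F| + ‖‖D F‖_{L²(μ)}‖_{L^p(P)} + ‖‖D F‖_{L^p(μ)}‖_{L^p(P)})`. -/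
theorem stmt4 (p : ℝ) (hp : 2 ≤ p) :
    ∃ C : ℝ, 0 < C ∧
      ∀ (Ω U : Type) [MeasurableSpace Ω] [MeasurableSpace U]
        (P : Measure Ω) (μ : Measure U),
        IsProbabilityMeasure P → SigmaFinite μ →
        ∀ T : U × Ω → Ω, Measurable T →
        (∀ G : Ω → ℝ, Measurable G → Integrable G P →
          (∫⁻ ω, ENNReal.ofReal ((G ω) ^ 2) ∂P)
            ≤ ENNReal.ofReal ((∫ ω, G ω ∂P) ^ 2)
              + ∫⁻ ω, ∫⁻ u, ENNReal.ofReal ((G (T (u, ω)) - G ω) ^ 2) ∂μ ∂P) →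
        ∀ F : Ω → ℝ, Measurable F → Integrable F P →
        (∫⁻ ω, ENNReal.ofReal (|F ω| ^ p) ∂P) ^ (1 / p)
          ≤ ENNReal.ofReal C *
              (ENNReal.ofReal |∫ ω, F ω ∂P|
                + (∫⁻ ω, (∫⁻ u, ENNReal.ofReal ((F (T (u, ω)) - F ω) ^ 2) ∂μ) ^ (p / 2) ∂P)
                    ^ (1 / p)
                + (∫⁻ ω, ∫⁻ u, ENNReal.ofReal (|F (T (u, ω)) - F ω| ^ p) ∂μ ∂P)
                    ^ (1 / p)) := by
  have hp0 : (0:ℝ) < p := by linarith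
  set K : ℝ := p^2/4 * 2^(p-1) with hK_def
  have h2p : (1:ℝ) ≤ 2^(p-1) := Real.one_le_rpow one_le_two (by linarith)
  have hK1 : 1 ≤ K := by nlinarith
  have hK0 : 0 ≤ K := by linarith
  set C : ℝ := 1 + ((1 + 2*K)^(p-1))^(1/p) with hC_def
  have hCC : 0 ≤ ((1 + 2*K)^(p-1))^(1/p) := Real.rpow_nonneg (Real.rpow_nonneg (by linarith) _) _
  have hC1 : 1 ≤ C := by rw [hC_def]; linarith
  have hC0 : 0 < C := by linarith
  refine ⟨C, hC0, ?_⟩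
  intro Ω U mΩ mU P μ hP hμ T hT hSG F hF hFi
  haveI := hP
  haveI := hμ
  set A := ENNReal.ofReal |∫ ω, F ω ∂P| with hA_def
  set V : Ω → ℝ≥0∞ := fun ω => ∫⁻ u, ENNReal.ofReal ((F (T (u, ω)) - F ω) ^ 2) ∂μ with hV_def
  set W : Ω → ℝ≥0∞ := fun ω => ∫⁻ u, ENNReal.ofReal (|F (T (u, ω)) - F ω| ^ p) ∂μ with hW_def
  set B2 := ∫⁻ ω, (V ω) ^ (p / 2) ∂P with hB2_def
  set Cp := ∫⁻ ω, W ω ∂P with hCp_def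
  set S := A + B2 ^ (1/p) + Cp ^ (1/p) with hS_def
  -- measurability facts
  have hD : Measurable fun q : Ω × U => F (T (q.2, q.1)) - F q.1 :=
    (hF.comp (hT.comp measurable_swap)).sub (hF.comp measurable_fst)
  have hVmeas : Measurable V :=
    Measurable.lintegral_prod_right' (f := fun q : Ω × U =>
      ENNReal.ofReal ((F (T (q.2, q.1)) - F q.1) ^ 2)) ((hD.pow_const 2).ennreal_ofReal)
  have hWmeas : Measurable W :=
    Measurable.lintegral_prod_right' (f := fun q : Ω × U =>
      ENNReal.ofReal (|F (T (q.2, q.1)) - F q.1| ^ p))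
      ((hD.abs.pow measurable_const).ennreal_ofReal)
  -- trivial case: RHS infinite
  by_cases hStop : S = ⊤
  · rw [hStop, ENNReal.mul_top (by simpa [ENNReal.ofReal_eq_zero] using not_le.mpr hC0)]
    exact le_top
  have hCge : (1:ℝ≥0∞) ≤ ENNReal.ofReal C := ENNReal.one_le_ofReal.mpr hC1
  have habs2 : ∀ x : ℝ, |x| ^ (2:ℝ) = x ^ 2 := fun x => by
    rw [show (2:ℝ) = ((2:ℕ):ℝ) by norm_num, Real.rpow_natCast, sq_abs]
  have hSGF := hSG F hF hFi
  have hA2 : ENNReal.ofReal ((∫ ω, F ω ∂P) ^ 2) = A ^ (2:ℝ) := by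
    rw [hA_def, ← sq_abs, ENNReal.ofReal_pow (abs_nonneg _),
      show ((2:ℝ)) = ((2:ℕ):ℝ) by norm_num, ENNReal.rpow_natCast]
  rcases eq_or_lt_of_le hp with hp2 | hp2
  · -- the case p = 2
    subst hp2
    have hB2eq : B2 = ∫⁻ ω, V ω ∂P := by
      rw [hB2_def]
      norm_num
    have h1 : ∫⁻ ω, ENNReal.ofReal (|F ω| ^ (2:ℝ)) ∂P ≤ A ^ (2:ℝ) + B2 := by
      calc ∫⁻ ω, ENNReal.ofReal (|F ω| ^ (2:ℝ)) ∂P = ∫⁻ ω, ENNReal.ofReal ((F ω) ^ 2) ∂P := by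
            apply lintegral_congr; intro ω; rw [habs2]
        _ ≤ ENNReal.ofReal ((∫ ω, F ω ∂P) ^ 2) + ∫⁻ ω, V ω ∂P := hSGF
        _ = A ^ (2:ℝ) + B2 := by rw [hA2, hB2eq]
    have h3 : (B2 ^ (1/(2:ℝ))) ^ (2:ℝ) = B2 := by
      rw [← ENNReal.rpow_mul]; norm_num
    have h2 : (A ^ (2:ℝ) + (B2 ^ (1/(2:ℝ))) ^ (2:ℝ)) ^ (1/(2:ℝ)) ≤ A + B2 ^ (1/(2:ℝ)) := by
      have := ENNReal.rpow_add_rpow_le A (B2 ^ (1/(2:ℝ))) one_pos one_le_two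
      simpa using this
    calc (∫⁻ ω, ENNReal.ofReal (|F ω| ^ (2:ℝ)) ∂P) ^ (1/(2:ℝ))
        ≤ (A ^ (2:ℝ) + B2) ^ (1/(2:ℝ)) := ENNReal.rpow_le_rpow h1 (by norm_num)
      _ = (A ^ (2:ℝ) + (B2 ^ (1/(2:ℝ))) ^ (2:ℝ)) ^ (1/(2:ℝ)) := by rw [h3]
      _ ≤ A + B2 ^ (1/(2:ℝ)) := h2
      _ ≤ S := le_self_add
      _ = 1 * S := (one_mul S).symm
      _ ≤ ENNReal.ofReal C * S := mul_le_mul_left hCge S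
  · -- the case 2 < p
    have hp1 : (0:ℝ) < p - 1 := by linarith
    have hp2' : (0:ℝ) < p - 2 := by linarith
    have keyM : ∀ M : ℕ, ∫⁻ ω, ENNReal.ofReal ((min |F ω| (M:ℝ)) ^ p) ∂P
        ≤ (ENNReal.ofReal C * S) ^ p := by
      intro M
      set fm : Ω → ℝ := fun ω => min |F ω| (M:ℝ) with hfm_def
      have hfm0 : ∀ ω, 0 ≤ fm ω := fun ω => le_min (abs_nonneg _) (Nat.cast_nonneg _)
      have hfmM : ∀ ω, fm ω ≤ (M:ℝ) := fun ω => min_le_right _ _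
      have hfmmeas : Measurable fm := hF.abs.min measurable_const
      set g : Ω → ℝ≥0∞ := fun ω => ENNReal.ofReal (fm ω) with hg_def
      have hgmeas : Measurable g := hfmmeas.ennreal_ofReal
      set L := ∫⁻ ω, (g ω) ^ p ∂P with hL_def
      have hLeq : L = ∫⁻ ω, ENNReal.ofReal (fm ω ^ p) ∂P :=
        lintegral_congr fun ω => ENNReal.ofReal_rpow_of_nonneg (hfm0 ω) hp0.le
      have hLne : L ≠ ⊤ := by
        refine ne_top_of_le_ne_top (ENNReal.ofReal_ne_top : ENNReal.ofReal ((M:ℝ) ^ p) ≠ ⊤) ?_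
        rw [hL_def]
        calc ∫⁻ ω, (g ω) ^ p ∂P ≤ ∫⁻ _, ENNReal.ofReal ((M:ℝ) ^ p) ∂P := by
              refine lintegral_mono fun ω => ?_
              rw [← ENNReal.ofReal_rpow_of_nonneg (Nat.cast_nonneg _) hp0.le]
              exact ENNReal.rpow_le_rpow (ENNReal.ofReal_le_ofReal (hfmM ω)) hp0.le
          _ = ENNReal.ofReal ((M:ℝ) ^ p) := by simp [measure_univ]
      set GM : Ω → ℝ := fun ω => fm ω ^ (p/2) with hGM_def
      have hGMnn : ∀ ω, 0 ≤ GM ω := fun ω => Real.rpow_nonneg (hfm0 ω) _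
      have hGMmeas : Measurable GM := hfmmeas.pow measurable_const
      have hGMint : Integrable GM P := by
        refine (integrable_const ((M:ℝ) ^ (p/2))).mono' hGMmeas.aestronglyMeasurable
          (ae_of_all _ fun ω => ?_)
        rw [Real.norm_eq_abs, abs_of_nonneg (hGMnn ω)]
        exact Real.rpow_le_rpow (hfm0 ω) (hfmM ω) (by positivity)
      have h0 := hSG GM hGMmeas hGMint
      -- rewrite the left-hand side of h0
      have hLHS : ∫⁻ ω, ENNReal.ofReal (GM ω ^ 2) ∂P = L := by
        rw [hLeq]
        apply lintegral_congr
        intro ω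
        congr 1
        rw [hGM_def, ← Real.rpow_natCast (fm ω ^ (p/2)) 2, ← Real.rpow_mul (hfm0 ω)]
        norm_num
      -- the mean term
      have hMid : ENNReal.ofReal ((∫ ω, GM ω ∂P) ^ 2) = (∫⁻ ω, (g ω) ^ (p/2) ∂P) ^ (2:ℝ) := by
        rw [ENNReal.ofReal_pow (integral_nonneg hGMnn),
          ofReal_integral_eq_lintegral_ofReal hGMint (ae_of_all _ hGMnn),
          show ((2:ℝ)) = ((2:ℕ):ℝ) by norm_num, ENNReal.rpow_natCast]
        congr 1
        apply lintegral_congr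
        intro ω
        exact (ENNReal.ofReal_rpow_of_nonneg (hfm0 ω) (by positivity)).symm
      -- Hoelder interpolation for the mean term
      set q1 : ℝ := 2*(p-1)/p with hq1_def
      set q1' : ℝ := 2*(p-1)/(p-2) with hq1'_def
      set a1 : ℝ := p/(2*(p-1)) with ha1_def
      have hq1conj : Real.HolderConjugate q1 q1' := by
        rw [Real.holderConjugate_iff]
        constructor
        · rw [hq1_def, lt_div_iff₀ hp0]; linarith
        · rw [hq1_def, hq1'_def]; field_simp; ring
      have ha10 : (0:ℝ) ≤ a1 := by rw [ha1_def]; positivity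
      have hb10 : (0:ℝ) ≤ p/2 - a1 := by
        rw [ha1_def, sub_nonneg, div_le_div_iff₀ (by linarith) (by linarith)]
        nlinarith
      have hHold1 : ∫⁻ ω, (g ω) ^ (p/2) ∂P ≤ (∫⁻ ω, g ω ∂P) ^ (1/q1) * L ^ (1/q1') := by
        have h := ENNReal.lintegral_mul_le_Lp_mul_Lq P hq1conj
          ((hgmeas.pow measurable_const).aemeasurable :
            AEMeasurable (fun ω => (g ω) ^ a1) P)
          ((hgmeas.pow measurable_const).aemeasurable :
            AEMeasurable (fun ω => (g ω) ^ (p/2 - a1)) P)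
        calc ∫⁻ ω, (g ω) ^ (p/2) ∂P
            = ∫⁻ ω, ((fun ω => (g ω) ^ a1) * fun ω => (g ω) ^ (p/2 - a1)) ω ∂P := by
              apply lintegral_congr
              intro ω
              rw [Pi.mul_apply, ← ENNReal.rpow_add_of_nonneg _ _ ha10 hb10]
              congr 1
              try ring
          _ ≤ (∫⁻ ω, ((g ω) ^ a1) ^ q1 ∂P) ^ (1/q1)
              * (∫⁻ ω, ((g ω) ^ (p/2 - a1)) ^ q1' ∂P) ^ (1/q1') := h
          _ = (∫⁻ ω, g ω ∂P) ^ (1/q1) * L ^ (1/q1') := by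
              rw [hL_def]
              congr 2
              · apply lintegral_congr
                intro ω
                rw [← ENNReal.rpow_mul,
                  show a1 * q1 = 1 by rw [ha1_def, hq1_def]; field_simp; try ring,
                  ENNReal.rpow_one]
              · apply lintegral_congr
                intro ω
                rw [← ENNReal.rpow_mul]
                congr 1
                rw [ha1_def, hq1'_def]
                field_simp
                ring
      -- bound on the first moment
      have hN1S : ∫⁻ ω, g ω ∂P ≤ S := by
        have hJF : ∫⁻ ω, ENNReal.ofReal |F ω| ∂P
            ≤ (∫⁻ ω, (ENNReal.ofReal |F ω|) ^ (2:ℝ) ∂P) ^ (1/(2:ℝ)) :=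
          aux_jensen hF.abs.ennreal_ofReal.aemeasurable one_lt_two
        have hJV : ∫⁻ ω, V ω ∂P ≤ B2 ^ (2/p) := by
          have h := aux_jensen (hVmeas.aemeasurable : AEMeasurable V P) (show (1:ℝ) < p/2 by linarith)
          rwa [one_div_div, ← hB2_def] at h
        have hFsq : ∫⁻ ω, (ENNReal.ofReal |F ω|) ^ (2:ℝ) ∂P ≤ A ^ (2:ℝ) + B2 ^ (2/p) := by
          calc ∫⁻ ω, (ENNReal.ofReal |F ω|) ^ (2:ℝ) ∂P
              = ∫⁻ ω, ENNReal.ofReal ((F ω) ^ 2) ∂P := by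
                apply lintegral_congr
                intro ω
                rw [ENNReal.ofReal_rpow_of_nonneg (abs_nonneg _) (by norm_num), habs2]
            _ ≤ ENNReal.ofReal ((∫ ω, F ω ∂P) ^ 2) + ∫⁻ ω, V ω ∂P := hSGF
            _ ≤ A ^ (2:ℝ) + B2 ^ (2/p) := by
                rw [hA2]
                exact add_le_add_right hJV _
        have h2 : B2 ^ ((2:ℝ)/p) = (B2 ^ (1/p)) ^ (2:ℝ) := by
          rw [← ENNReal.rpow_mul]
          congr 1
          rw [one_div]
          ring
        have h3 : (A ^ (2:ℝ) + (B2 ^ (1/p)) ^ (2:ℝ)) ^ (1/(2:ℝ)) ≤ A + B2 ^ (1/p) := by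
          have := ENNReal.rpow_add_rpow_le A (B2 ^ (1/p)) one_pos one_le_two
          simpa using this
        calc ∫⁻ ω, g ω ∂P ≤ ∫⁻ ω, ENNReal.ofReal |F ω| ∂P :=
              lintegral_mono fun ω => ENNReal.ofReal_le_ofReal (min_le_left _ _)
          _ ≤ (∫⁻ ω, (ENNReal.ofReal |F ω|) ^ (2:ℝ) ∂P) ^ (1/(2:ℝ)) := hJF
          _ ≤ (A ^ (2:ℝ) + B2 ^ (2/p)) ^ (1/(2:ℝ)) := ENNReal.rpow_le_rpow hFsq (by norm_num)
          _ = (A ^ (2:ℝ) + (B2 ^ (1/p)) ^ (2:ℝ)) ^ (1/(2:ℝ)) := by rw [h2]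
          _ ≤ A + B2 ^ (1/p) := h3
          _ ≤ S := le_self_add
      -- gradient term, pointwise bound
      have hgrad_pt : ∀ ω u, ENNReal.ofReal ((GM (T (u, ω)) - GM ω) ^ 2)
          ≤ ENNReal.ofReal K * ((g ω) ^ (p-2) * ENNReal.ofReal ((F (T (u, ω)) - F ω) ^ 2)
              + ENNReal.ofReal (|F (T (u, ω)) - F ω| ^ p)) := by
        intro ω u
        have hkey := aux_key (p := p) (M := (M:ℝ)) (x := F ω) (y := F (T (u, ω))) hp2
          (Nat.cast_nonneg _)
        calc ENNReal.ofReal ((GM (T (u, ω)) - GM ω) ^ 2)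
            ≤ ENNReal.ofReal (K * ((fm ω) ^ (p-2) * (F (T (u, ω)) - F ω) ^ 2
                + |F (T (u, ω)) - F ω| ^ p)) := ENNReal.ofReal_le_ofReal hkey
          _ = _ := by
              rw [ENNReal.ofReal_mul hK0,
                ENNReal.ofReal_add
                  (mul_nonneg (Real.rpow_nonneg (hfm0 ω) _) (sq_nonneg _))
                  (Real.rpow_nonneg (abs_nonneg _) _),
                ENNReal.ofReal_mul (Real.rpow_nonneg (hfm0 ω) _),
                ← ENNReal.ofReal_rpow_of_nonneg (hfm0 ω) (by linarith : (0:ℝ) ≤ p - 2)]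
      -- gradient term, integrated in u
      have hgrad1 : ∀ ω, ∫⁻ u, ENNReal.ofReal ((GM (T (u, ω)) - GM ω) ^ 2) ∂μ
          ≤ ENNReal.ofReal K * ((g ω) ^ (p-2) * V ω + W ω) := by
        intro ω
        have hc : Measurable fun u => ENNReal.ofReal ((F (T (u, ω)) - F ω) ^ 2) :=
          ((hD.pow_const 2).ennreal_ofReal).comp (measurable_prodMk_left : Measurable fun u : U => (ω, u))
        calc ∫⁻ u, ENNReal.ofReal ((GM (T (u, ω)) - GM ω) ^ 2) ∂μ
            ≤ ∫⁻ u, ENNReal.ofReal K * ((g ω) ^ (p-2)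
                * ENNReal.ofReal ((F (T (u, ω)) - F ω) ^ 2)
                + ENNReal.ofReal (|F (T (u, ω)) - F ω| ^ p)) ∂μ :=
              lintegral_mono (hgrad_pt ω)
          _ = ENNReal.ofReal K * ∫⁻ u, ((g ω) ^ (p-2)
                * ENNReal.ofReal ((F (T (u, ω)) - F ω) ^ 2)
                + ENNReal.ofReal (|F (T (u, ω)) - F ω| ^ p)) ∂μ :=
              lintegral_const_mul' _ _ ENNReal.ofReal_ne_top
          _ = ENNReal.ofReal K * ((g ω) ^ (p-2) * V ω + W ω) := by
              rw [lintegral_add_left (f := fun u => (g ω) ^ (p-2) * ENNReal.ofReal ((F (T (u, ω)) - F ω) ^ 2)) (measurable_const.mul hc),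
                lintegral_const_mul' _ _
                  (ENNReal.rpow_ne_top_of_nonneg (by linarith) ENNReal.ofReal_ne_top)]
      -- gradient term, fully integrated
      have hgrad : ∫⁻ ω, ∫⁻ u, ENNReal.ofReal ((GM (T (u, ω)) - GM ω) ^ 2) ∂μ ∂P
          ≤ ENNReal.ofReal K * ((∫⁻ ω, (g ω) ^ (p-2) * V ω ∂P) + Cp) := by
        calc ∫⁻ ω, ∫⁻ u, ENNReal.ofReal ((GM (T (u, ω)) - GM ω) ^ 2) ∂μ ∂P
            ≤ ∫⁻ ω, ENNReal.ofReal K * ((g ω) ^ (p-2) * V ω + W ω) ∂P :=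
              lintegral_mono hgrad1
          _ = ENNReal.ofReal K * ∫⁻ ω, ((g ω) ^ (p-2) * V ω + W ω) ∂P :=
              lintegral_const_mul' _ _ ENNReal.ofReal_ne_top
          _ = ENNReal.ofReal K * ((∫⁻ ω, (g ω) ^ (p-2) * V ω ∂P) + Cp) := by
              rw [lintegral_add_left (f := fun ω => (g ω) ^ (p-2) * V ω) ((hgmeas.pow measurable_const).mul hVmeas), hCp_def]
      -- Hoelder for the gradient term
      have hq2conj : Real.HolderConjugate (p/(p-2)) (p/2) := by
        rw [Real.holderConjugate_iff]
        constructor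
        · rw [lt_div_iff₀ hp2']; linarith
        · field_simp
          try ring
      have hHold2 : ∫⁻ ω, (g ω) ^ (p-2) * V ω ∂P ≤ L ^ ((p-2)/p) * B2 ^ ((2:ℝ)/p) := by
        have h := ENNReal.lintegral_mul_le_Lp_mul_Lq P hq2conj
          ((hgmeas.pow measurable_const).aemeasurable :
            AEMeasurable (fun ω => (g ω) ^ (p-2)) P)
          hVmeas.aemeasurable
        calc ∫⁻ ω, (g ω) ^ (p-2) * V ω ∂P
            = ∫⁻ ω, ((fun ω => (g ω) ^ (p-2)) * V) ω ∂P := by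
              apply lintegral_congr
              intro ω
              rw [Pi.mul_apply]
          _ ≤ (∫⁻ ω, ((g ω) ^ (p-2)) ^ (p/(p-2)) ∂P) ^ (1/(p/(p-2)))
              * (∫⁻ ω, (V ω) ^ (p/2) ∂P) ^ (1/(p/2)) := h
          _ = L ^ ((p-2)/p) * B2 ^ ((2:ℝ)/p) := by
              rw [one_div_div, one_div_div, hL_def, ← hB2_def]
              congr 2
              apply lintegral_congr
              intro ω
              rw [← ENNReal.rpow_mul]
              congr 1
              field_simp
      -- combine everything
      have hB2S : B2 ^ ((2:ℝ)/p) ≤ S ^ (2:ℝ) := by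
        have h2 : B2 ^ ((2:ℝ)/p) = (B2 ^ (1/p)) ^ (2:ℝ) := by
          rw [← ENNReal.rpow_mul]
          congr 1
          rw [one_div]
          ring
        rw [h2]
        exact ENNReal.rpow_le_rpow (le_trans le_add_self le_self_add) (by norm_num)
      have hCpS : Cp ≤ S ^ p := by
        have h1 : Cp = (Cp ^ (1/p)) ^ p := by
          rw [← ENNReal.rpow_mul, one_div_mul_cancel hp0.ne', ENNReal.rpow_one]
        rw [h1]
        exact ENNReal.rpow_le_rpow le_add_self hp0.le
      have hcombine : L ≤ S ^ (p/(p-1)) * L ^ ((p-2)/(p-1))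
          + ENNReal.ofReal K * (S ^ (2:ℝ) * L ^ ((p-2)/p)) + ENNReal.ofReal K * S ^ p := by
        have hsplit : ((∫⁻ ω, g ω ∂P) ^ (1/q1) * L ^ (1/q1')) ^ (2:ℝ)
            = (∫⁻ ω, g ω ∂P) ^ ((p:ℝ)/(p-1)) * L ^ ((p-2)/(p-1)) := by
          rw [ENNReal.mul_rpow_of_nonneg _ _ (by norm_num : (0:ℝ) ≤ 2),
            ← ENNReal.rpow_mul, ← ENNReal.rpow_mul]
          congr 2
          · rw [hq1_def]; field_simp
          · rw [hq1'_def]; field_simp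
        calc L = ∫⁻ ω, ENNReal.ofReal (GM ω ^ 2) ∂P := hLHS.symm
          _ ≤ ENNReal.ofReal ((∫ ω, GM ω ∂P) ^ 2)
              + ∫⁻ ω, ∫⁻ u, ENNReal.ofReal ((GM (T (u, ω)) - GM ω) ^ 2) ∂μ ∂P := h0
          _ ≤ (∫⁻ ω, (g ω) ^ (p/2) ∂P) ^ (2:ℝ)
              + ENNReal.ofReal K * ((∫⁻ ω, (g ω) ^ (p-2) * V ω ∂P) + Cp) := by
              rw [hMid]
              exact add_le_add_right hgrad _
          _ ≤ ((∫⁻ ω, g ω ∂P) ^ (1/q1) * L ^ (1/q1')) ^ (2:ℝ)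
              + ENNReal.ofReal K * (L ^ ((p-2)/p) * B2 ^ ((2:ℝ)/p) + Cp) := by
              refine add_le_add (ENNReal.rpow_le_rpow hHold1 (by norm_num)) ?_
              exact mul_le_mul_right (add_le_add_left hHold2 _) _
          _ ≤ S ^ (p/(p-1)) * L ^ ((p-2)/(p-1))
              + ENNReal.ofReal K * (S ^ (2:ℝ) * L ^ ((p-2)/p) + S ^ p) := by
              refine add_le_add ?_ (mul_le_mul_right (add_le_add ?_ hCpS) _)
              · rw [hsplit]
                exact mul_le_mul_left (ENNReal.rpow_le_rpow hN1S (by positivity)) _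
              · rw [mul_comm (L ^ ((p-2)/p)) (B2 ^ ((2:ℝ)/p))]
                exact mul_le_mul_left hB2S _
          _ = S ^ (p/(p-1)) * L ^ ((p-2)/(p-1))
              + ENNReal.ofReal K * (S ^ (2:ℝ) * L ^ ((p-2)/p)) + ENNReal.ofReal K * S ^ p := by
              rw [mul_add, add_assoc]
      -- pass to real numbers
      have ht1ne : S ^ (p/(p-1)) * L ^ ((p-2)/(p-1)) ≠ ⊤ :=
        ENNReal.mul_ne_top (ENNReal.rpow_ne_top_of_nonneg (by positivity) hStop)
          (ENNReal.rpow_ne_top_of_nonneg (by positivity) hLne)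
      have ht2ne : ENNReal.ofReal K * (S ^ (2:ℝ) * L ^ ((p-2)/p)) ≠ ⊤ :=
        ENNReal.mul_ne_top ENNReal.ofReal_ne_top
          (ENNReal.mul_ne_top (ENNReal.rpow_ne_top_of_nonneg (by norm_num) hStop)
            (ENNReal.rpow_ne_top_of_nonneg (by positivity) hLne))
      have ht3ne : ENNReal.ofReal K * S ^ p ≠ ⊤ :=
        ENNReal.mul_ne_top ENNReal.ofReal_ne_top
          (ENNReal.rpow_ne_top_of_nonneg hp0.le hStop)
      have hreal : L.toReal ≤ S.toReal ^ (p/(p-1)) * L.toReal ^ ((p-2)/(p-1))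
          + K * S.toReal ^ (2:ℝ) * L.toReal ^ ((p-2)/p) + K * S.toReal ^ p := by
        have h := ENNReal.toReal_mono (by
          exact ENNReal.add_ne_top.mpr ⟨ENNReal.add_ne_top.mpr ⟨ht1ne, ht2ne⟩, ht3ne⟩) hcombine
        rw [ENNReal.toReal_add (ENNReal.add_ne_top.mpr ⟨ht1ne, ht2ne⟩) ht3ne,
          ENNReal.toReal_add ht1ne ht2ne, ENNReal.toReal_mul, ENNReal.toReal_mul,
          ENNReal.toReal_mul, ENNReal.toReal_mul, ENNReal.toReal_ofReal hK0,
          ← ENNReal.toReal_rpow, ← ENNReal.toReal_rpow, ← ENNReal.toReal_rpow,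
          ← ENNReal.toReal_rpow, ← ENNReal.toReal_rpow] at h
        calc L.toReal ≤ _ := h
          _ = S.toReal ^ (p/(p-1)) * L.toReal ^ ((p-2)/(p-1))
              + K * S.toReal ^ (2:ℝ) * L.toReal ^ ((p-2)/p) + K * S.toReal ^ p := by ring
      have hfinal := aux_wrap hp2 hK1 ENNReal.toReal_nonneg ENNReal.toReal_nonneg hreal
      have hLle : L ≤ ENNReal.ofReal ((1+2*K) ^ (p-1)) * S ^ p := by
        calc L = ENNReal.ofReal L.toReal := (ENNReal.ofReal_toReal hLne).symm
          _ ≤ ENNReal.ofReal ((1+2*K) ^ (p-1) * S.toReal ^ p) :=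
              ENNReal.ofReal_le_ofReal hfinal
          _ = ENNReal.ofReal ((1+2*K) ^ (p-1)) * ENNReal.ofReal (S.toReal ^ p) :=
              ENNReal.ofReal_mul (Real.rpow_nonneg (by linarith) _)
          _ = ENNReal.ofReal ((1+2*K) ^ (p-1)) * S ^ p := by
              rw [← ENNReal.ofReal_rpow_of_nonneg ENNReal.toReal_nonneg hp0.le,
                ENNReal.ofReal_toReal hStop]
      have hCpow : ENNReal.ofReal ((1+2*K) ^ (p-1)) ≤ (ENNReal.ofReal C) ^ p := by
        rw [ENNReal.ofReal_rpow_of_nonneg (by linarith : (0:ℝ) ≤ C) hp0.le]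
        apply ENNReal.ofReal_le_ofReal
        calc (1+2*K) ^ (p-1) = (((1+2*K) ^ (p-1)) ^ (1/p)) ^ p := by
              rw [← Real.rpow_mul (Real.rpow_nonneg (by linarith) _),
                one_div_mul_cancel hp0.ne', Real.rpow_one]
          _ ≤ C ^ p := Real.rpow_le_rpow hCC (by rw [hC_def]; linarith) hp0.le
      calc ∫⁻ ω, ENNReal.ofReal ((min |F ω| (M:ℝ)) ^ p) ∂P = L := hLeq.symm
        _ ≤ ENNReal.ofReal ((1+2*K) ^ (p-1)) * S ^ p := hLle
        _ ≤ (ENNReal.ofReal C) ^ p * S ^ p := mul_le_mul_left hCpow _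
        _ = (ENNReal.ofReal C * S) ^ p := (ENNReal.mul_rpow_of_nonneg _ _ hp0.le).symm
    have hmeasM : ∀ M : ℕ, Measurable fun ω => ENNReal.ofReal ((min |F ω| (M:ℝ)) ^ p) :=
      fun M => ((hF.abs.min measurable_const).pow measurable_const).ennreal_ofReal
    have hmono : Monotone (fun (M : ℕ) (ω : Ω) => ENNReal.ofReal ((min |F ω| (M:ℝ)) ^ p)) := by
      intro M N hMN ω
      apply ENNReal.ofReal_le_ofReal
      exact Real.rpow_le_rpow (le_min (abs_nonneg _) (Nat.cast_nonneg _))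
        (min_le_min le_rfl (Nat.cast_le.mpr hMN)) hp0.le
    have hsup : ∫⁻ ω, ENNReal.ofReal (|F ω| ^ p) ∂P
        = ⨆ M : ℕ, ∫⁻ ω, ENNReal.ofReal ((min |F ω| (M:ℝ)) ^ p) ∂P := by
      rw [← lintegral_iSup hmeasM hmono]
      apply lintegral_congr
      intro ω
      apply le_antisymm
      · refine le_iSup_of_le ⌈|F ω|⌉₊ ?_
        rw [min_eq_left (Nat.le_ceil _)]
      · exact iSup_le fun M => ENNReal.ofReal_le_ofReal
          (Real.rpow_le_rpow (le_min (abs_nonneg _) (Nat.cast_nonneg _)) (min_le_left _ _) hp0.le)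
    rw [hsup]
    calc (⨆ M : ℕ, ∫⁻ ω, ENNReal.ofReal ((min |F ω| (M:ℝ)) ^ p) ∂P) ^ (1/p)
        ≤ ((ENNReal.ofReal C * S) ^ p) ^ (1/p) :=
          ENNReal.rpow_le_rpow (iSup_le keyM) (by positivity)
      _ = ENNReal.ofReal C * S := by
          rw [← ENNReal.rpow_mul, mul_one_div_cancel hp0.ne', ENNReal.rpow_one]
end

section
/- For all α, β ∈ (0,3) with α + β > 3 there exists a constant C > 0, depending only on α and β, such that for every ε ∈ (0,1) and all x, z ∈ ℝ×𝕋 one has ∫_{ℝ×𝕋} |x−y|^{−α} (|y−z|+ε)^{−β} dy ≤ C (|x−z|+ε)^{3−α−β}. -/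
open MeasureTheory Real

/-- The parabolic norm `|x| = √|x₀| + d(x₁,0)` of a space-time point of `ℝ × 𝕋`,
where `𝕋 = ℝ/ℤ` is the unit torus. The parabolic distance between `x` and `y`
is `pnorm (x - y)`. -/
noncomputable def pnorm (x : ℝ × AddCircle (1 : ℝ)) : ℝ :=
  Real.sqrt |x.1| + ‖x.2‖

section Aux

open Set ENNReal

local notation "X" => ℝ × AddCircle (1 : ℝ)

lemma pnorm_nonneg (x : X) : 0 ≤ pnorm x :=
  add_nonneg (Real.sqrt_nonneg _) (norm_nonneg _)

lemma pnorm_neg (x : X) : pnorm (-x) = pnorm x := by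
  simp [pnorm]

lemma sqrt_add_le' {a b : ℝ} (ha : 0 ≤ a) (hb : 0 ≤ b) :
    Real.sqrt (a + b) ≤ Real.sqrt a + Real.sqrt b := by
  have hkey : a + b ≤ (Real.sqrt a + Real.sqrt b) ^ 2 := by
    nlinarith [Real.sq_sqrt ha, Real.sq_sqrt hb, Real.sqrt_nonneg a, Real.sqrt_nonneg b,
      mul_nonneg (Real.sqrt_nonneg a) (Real.sqrt_nonneg b)]
  calc Real.sqrt (a + b) ≤ Real.sqrt ((Real.sqrt a + Real.sqrt b) ^ 2) :=
        Real.sqrt_le_sqrt hkey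
    _ = Real.sqrt a + Real.sqrt b := Real.sqrt_sq (by positivity)

lemma pnorm_add_le (x y : X) : pnorm (x + y) ≤ pnorm x + pnorm y := by
  have h1 : Real.sqrt |(x + y).1| ≤ Real.sqrt |x.1| + Real.sqrt |y.1| :=
    le_trans (Real.sqrt_le_sqrt (by simpa using abs_add_le x.1 y.1))
      (sqrt_add_le' (abs_nonneg _) (abs_nonneg _))
  have h2 : ‖(x + y).2‖ ≤ ‖x.2‖ + ‖y.2‖ := norm_add_le _ _
  simp only [pnorm]
  linarith

lemma pnorm_triangle (x y z : X) : pnorm (x - z) ≤ pnorm (x - y) + pnorm (y - z) := by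
  have h := pnorm_add_le (x - y) (y - z)
  rw [sub_add_sub_cancel] at h
  exact h

lemma continuous_pnorm : Continuous pnorm := by
  unfold pnorm; fun_prop

lemma measurable_pnorm : Measurable pnorm := continuous_pnorm.measurable

instance volX_addLeftInvariant : (volume : Measure X).IsAddLeftInvariant :=
  inferInstanceAs (((volume : Measure ℝ).prod volume).IsAddLeftInvariant)

instance volX_haar : (volume : Measure X).IsAddHaarMeasure :=
  inferInstanceAs (((volume : Measure ℝ).prod volume).IsAddHaarMeasure)

instance volX_regular : (volume : Measure X).Regular :=
  inferInstanceAs (((volume : Measure ℝ).prod volume).Regular)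

instance volX_negInvariant : (volume : Measure X).IsNegInvariant :=
  Measure.IsAddHaarMeasure.isNegInvariant_of_regular _

lemma lintegral_shift_left (g : X → ℝ≥0∞) (hg : Measurable g) (x : X) :
    ∫⁻ y, g (x - y) = ∫⁻ y, g y :=
  (Measure.measurePreserving_sub_left volume x).lintegral_comp hg

lemma lintegral_shift_right (g : X → ℝ≥0∞) (hg : Measurable g) (z : X) :
    ∫⁻ y, g (y - z) = ∫⁻ y, g y := by
  have h1 : (fun y : X => g (y - z)) = fun y : X => (fun w => g (-w)) (z - y) := by
    funext y; simp [neg_sub]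
  rw [h1, lintegral_shift_left (fun w => g (-w)) (hg.comp measurable_neg) z]
  exact (Measure.measurePreserving_neg volume).lintegral_comp hg

lemma setLIntegral_shift_left (g : X → ℝ≥0∞) (hg : Measurable g) {s : Set X}
    (hs : MeasurableSet s) (x : X) :
    ∫⁻ y in {y : X | x - y ∈ s}, g (x - y) = ∫⁻ w in s, g w := by
  have hT : MeasurableSet {y : X | x - y ∈ s} := (measurable_id.const_sub x) hs
  rw [← lintegral_indicator hT, ← lintegral_indicator hs]
  rw [show ({y : X | x - y ∈ s}.indicator fun y => g (x - y))
      = fun y => (s.indicator g) (x - y) from ?_]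
  · exact lintegral_shift_left (s.indicator g) (hg.indicator hs) x
  · funext y
    by_cases h : x - y ∈ s <;> simp [Set.indicator, h]

lemma setLIntegral_shift_right (g : X → ℝ≥0∞) (hg : Measurable g) {s : Set X}
    (hs : MeasurableSet s) (z : X) :
    ∫⁻ y in {y : X | y - z ∈ s}, g (y - z) = ∫⁻ w in s, g w := by
  have hT : MeasurableSet {y : X | y - z ∈ s} := (measurable_id.sub_const z) hs
  rw [← lintegral_indicator hT, ← lintegral_indicator hs]
  rw [show ({y : X | y - z ∈ s}.indicator fun y => g (y - z))
      = fun y => (s.indicator g) (y - z) from ?_]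
  · exact lintegral_shift_right (s.indicator g) (hg.indicator hs) z
  · funext y
    by_cases h : y - z ∈ s <;> simp [Set.indicator, h]

lemma volume_pball_le {s : ℝ} (hs : 0 < s) :
    volume {w : X | pnorm w ≤ s} ≤ ENNReal.ofReal (4 * s ^ 3) := by
  have hsub : {w : X | pnorm w ≤ s}
      ⊆ (Set.Icc (-(s^2)) (s^2)) ×ˢ (Metric.closedBall (0 : AddCircle (1:ℝ)) s) := by
    intro w hw
    have hw' : Real.sqrt |w.1| + ‖w.2‖ ≤ s := hw
    have h0 : Real.sqrt |w.1| ≤ s := le_trans (le_add_of_nonneg_right (norm_nonneg _)) hw'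
    have h2 : ‖w.2‖ ≤ s := le_trans (le_add_of_nonneg_left (Real.sqrt_nonneg _)) hw'
    have h1 : |w.1| ≤ s ^ 2 := by
      nlinarith [Real.sq_sqrt (abs_nonneg w.1), Real.sqrt_nonneg |w.1|]
    exact ⟨abs_le.mp h1, mem_closedBall_zero_iff.mpr h2⟩
  refine le_trans (measure_mono hsub) ?_
  rw [Measure.volume_eq_prod, Measure.prod_prod, Real.volume_Icc,
    AddCircle.volume_closedBall]
  rw [show (s^2 - -(s^2)) = 2 * s^2 by ring]
  rw [← ENNReal.ofReal_mul (by positivity)]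
  apply ENNReal.ofReal_le_ofReal
  rcases le_total (2 * s) 1 with h | h
  · rw [min_eq_right h]; nlinarith
  · rw [min_eq_left h]; nlinarith

lemma shell_bound {γ : ℝ} (hγ : 0 < γ) (u : ℕ → ℝ) (hu : ∀ k, 0 < u k) :
    ∫⁻ w in ⋃ k, {w : X | u k < pnorm w ∧ pnorm w ≤ 2 * u k},
      ENNReal.ofReal (pnorm w ^ (-γ))
      ≤ ∑' k : ℕ, ENNReal.ofReal (32 * u k ^ (3 - γ)) := by
  refine le_trans (lintegral_iUnion_le _ _) (ENNReal.tsum_le_tsum fun k => ?_)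
  have h1 : ∫⁻ w in {w : X | u k < pnorm w ∧ pnorm w ≤ 2 * u k},
      ENNReal.ofReal (pnorm w ^ (-γ))
      ≤ ∫⁻ _ in {w : X | u k < pnorm w ∧ pnorm w ≤ 2 * u k},
        ENNReal.ofReal (u k ^ (-γ)) :=
    setLIntegral_mono measurable_const fun w hw => ENNReal.ofReal_le_ofReal
      (Real.rpow_le_rpow_of_nonpos (hu k) hw.1.le (neg_nonpos.mpr hγ.le))
  refine le_trans h1 ?_
  rw [setLIntegral_const]
  have h2 : volume {w : X | u k < pnorm w ∧ pnorm w ≤ 2 * u k}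
      ≤ ENNReal.ofReal (4 * (2 * u k) ^ 3) :=
    le_trans (measure_mono fun w hw => hw.2) (volume_pball_le (mul_pos two_pos (hu k)))
  refine le_trans (mul_le_mul_right h2 _) ?_
  rw [← ENNReal.ofReal_mul (Real.rpow_nonneg (hu k).le _)]
  apply ENNReal.ofReal_le_ofReal
  apply le_of_eq
  have h3 : u k ^ (3 - γ) = u k ^ ((3:ℕ):ℝ) * u k ^ (-γ) := by
    rw [← Real.rpow_add (hu k)]
    have hcast : ((3:ℕ):ℝ) + -γ = 3 - γ := by push_cast; ring
    rw [hcast]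
  rw [h3, Real.rpow_natCast]
  ring

lemma tsum_geo_le {c q : ℝ} (hc : 0 ≤ c) (hq0 : 0 ≤ q) (hq1 : q < 1) :
    ∑' k : ℕ, ENNReal.ofReal (c * q ^ k) ≤ ENNReal.ofReal (c * (1 - q)⁻¹) := by
  have h : ∀ k : ℕ, ENNReal.ofReal (c * q ^ k)
      = ENNReal.ofReal c * ENNReal.ofReal q ^ k := fun k => by
    rw [ENNReal.ofReal_mul hc, ENNReal.ofReal_pow hq0]
  simp_rw [h]
  rw [ENNReal.tsum_mul_left, ENNReal.tsum_geometric]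
  rw [show (1 : ℝ≥0∞) - ENNReal.ofReal q = ENNReal.ofReal (1 - q) by
    rw [← ENNReal.ofReal_one, ← ENNReal.ofReal_sub _ hq0]]
  rw [← ENNReal.ofReal_inv_of_pos (by linarith), ← ENNReal.ofReal_mul hc]

lemma lemA {γ : ℝ} (hγ : γ ∈ Set.Ioo (0:ℝ) 3) :
    ∃ C : ℝ, 0 < C ∧ ∀ R : ℝ, 0 < R →
      ∫⁻ w in {w : X | pnorm w ≤ R}, ENNReal.ofReal (pnorm w ^ (-γ))
        ≤ ENNReal.ofReal (C * R ^ (3 - γ)) := by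
  obtain ⟨hγ0, hγ3⟩ := hγ
  set q : ℝ := (1/2 : ℝ) ^ (3 - γ) with hqdef
  have hq0 : 0 < q := Real.rpow_pos_of_pos (by norm_num) _
  have hq1 : q < 1 := Real.rpow_lt_one (by norm_num) (by norm_num) (by linarith)
  refine ⟨32 * q * (1 - q)⁻¹, mul_pos (mul_pos (by norm_num) hq0) (inv_pos.mpr (by linarith)), fun R hR => ?_⟩
  classical
  set u : ℕ → ℝ := fun k => R * (1/2 : ℝ) ^ (k + 1) with hudef
  have huk : ∀ k, 0 < u k := fun k => by
    simp only [hudef]; positivity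
  have hcov : {w : X | pnorm w ≤ R} ⊆ {w : X | pnorm w = 0} ∪
      ⋃ k, {w : X | u k < pnorm w ∧ pnorm w ≤ 2 * u k} := by
    intro w hw
    rcases eq_or_lt_of_le (pnorm_nonneg w) with h0 | h0
    · exact Or.inl h0.symm
    right
    have hP : ∃ n : ℕ, R * (1/2:ℝ) ^ n < pnorm w := by
      obtain ⟨n, hn⟩ := exists_pow_lt_of_lt_one (x := pnorm w / R) (y := (1/2:ℝ))
        (by positivity) (by norm_num)
      exact ⟨n, by rw [mul_comm]; exact (lt_div_iff₀ hR).mp hn⟩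
    have hk'spec : R * (1/2:ℝ) ^ (Nat.find hP) < pnorm w := Nat.find_spec hP
    have hk'pos : Nat.find hP ≠ 0 := by
      intro h
      rw [h] at hk'spec
      simp only [pow_zero, mul_one] at hk'spec
      have hw' : pnorm w ≤ R := hw
      linarith
    obtain ⟨m, hm⟩ := Nat.exists_eq_succ_of_ne_zero hk'pos
    have hmin := Nat.find_min hP (show m < Nat.find hP by omega)
    push_neg at hmin
    refine Set.mem_iUnion.mpr ⟨m, ?_, ?_⟩
    · show u m < pnorm w
      have : u m = R * (1/2:ℝ) ^ (Nat.find hP) := by rw [hudef, hm]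
      rw [this]; exact hk'spec
    · show pnorm w ≤ 2 * u m
      have : 2 * u m = R * (1/2:ℝ) ^ m := by
        simp only [hudef]; rw [pow_succ]; ring
      rw [this]; exact hmin
  refine le_trans (lintegral_mono_set hcov) ?_
  refine le_trans (lintegral_union_le _ _ _) ?_
  have hzero : ∫⁻ w in {w : X | pnorm w = 0}, ENNReal.ofReal (pnorm w ^ (-γ)) = 0 := by
    have hms : MeasurableSet {w : X | pnorm w = 0} :=
      measurable_pnorm (measurableSet_singleton 0)
    have hfz : ∀ w ∈ {w : X | pnorm w = 0}, ENNReal.ofReal (pnorm w ^ (-γ)) = (0:ℝ≥0∞) := by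
      intro w hw
      have hw' : pnorm w = 0 := hw
      rw [hw', Real.zero_rpow (neg_ne_zero.mpr (ne_of_gt hγ0))]
      simp
    calc ∫⁻ w in {w : X | pnorm w = 0}, ENNReal.ofReal (pnorm w ^ (-γ))
        = ∫⁻ _ in {w : X | pnorm w = 0}, (0:ℝ≥0∞) :=
          setLIntegral_congr_fun hms hfz
      _ = 0 := by simp
  rw [hzero, zero_add]
  refine le_trans (shell_bound hγ0 u huk) ?_
  have hterm : ∀ k : ℕ, ENNReal.ofReal ((32 : ℝ) * u k ^ (3 - γ))
      = ENNReal.ofReal ((32 * R ^ (3-γ) * q) * q ^ k) := by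
    intro k
    congr 1
    have e1 : ((1/2:ℝ) ^ (k+1 : ℕ)) ^ (3-γ) = q ^ (k+1 : ℕ) := by
      rw [← Real.rpow_natCast (1/2:ℝ) (k+1), ← Real.rpow_mul (by norm_num : (0:ℝ) ≤ 1/2),
        mul_comm (((k+1 : ℕ)):ℝ) (3-γ), Real.rpow_mul (by norm_num : (0:ℝ) ≤ 1/2),
        Real.rpow_natCast]
    simp only [hudef]
    rw [Real.mul_rpow hR.le (by positivity), e1, pow_succ]
    ring
  simp_rw [hterm]
  refine le_trans (tsum_geo_le (by positivity) hq0.le hq1) ?_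
  exact ENNReal.ofReal_le_ofReal (le_of_eq (by ring))

lemma lemB {γ : ℝ} (hγ3 : 3 < γ) :
    ∃ C : ℝ, 0 < C ∧ ∀ R : ℝ, 0 < R →
      ∫⁻ w in {w : X | R < pnorm w}, ENNReal.ofReal (pnorm w ^ (-γ))
        ≤ ENNReal.ofReal (C * R ^ (3 - γ)) := by
  have hγ0 : 0 < γ := by linarith
  set q : ℝ := (2:ℝ) ^ (3 - γ) with hqdef
  have hq0 : 0 < q := Real.rpow_pos_of_pos two_pos _
  have hq1 : q < 1 := Real.rpow_lt_one_of_one_lt_of_neg one_lt_two (by linarith)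
  refine ⟨32 * (1 - q)⁻¹, mul_pos (by norm_num) (inv_pos.mpr (by linarith)), fun R hR => ?_⟩
  classical
  set u : ℕ → ℝ := fun k => R * 2 ^ k with hudef
  have huk : ∀ k, 0 < u k := fun k => by simp only [hudef]; positivity
  have hcov : {w : X | R < pnorm w} ⊆
      ⋃ k, {w : X | u k < pnorm w ∧ pnorm w ≤ 2 * u k} := by
    intro w hw
    have hw' : R < pnorm w := hw
    have hP : ∃ n : ℕ, pnorm w ≤ R * 2 ^ n := by
      obtain ⟨n, hn⟩ := pow_unbounded_of_one_lt (pnorm w / R) (y := (2:ℝ)) one_lt_two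
      exact ⟨n, by rw [mul_comm]; exact le_of_lt ((div_lt_iff₀ hR).mp hn)⟩
    have hspec : pnorm w ≤ R * 2 ^ (Nat.find hP) := Nat.find_spec hP
    have hk0 : Nat.find hP ≠ 0 := by
      intro h
      rw [h] at hspec
      simp only [pow_zero, mul_one] at hspec
      linarith
    obtain ⟨m, hm⟩ := Nat.exists_eq_succ_of_ne_zero hk0
    have hmin := Nat.find_min hP (show m < Nat.find hP by omega)
    push_neg at hmin
    refine Set.mem_iUnion.mpr ⟨m, hmin, ?_⟩
    show pnorm w ≤ 2 * u m
    have : 2 * u m = R * 2 ^ (Nat.find hP) := by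
      simp only [hudef]; rw [hm, pow_succ]; ring
    rw [this]; exact hspec
  refine le_trans (lintegral_mono_set hcov) ?_
  refine le_trans (shell_bound hγ0 u huk) ?_
  have hterm : ∀ k : ℕ, ENNReal.ofReal ((32 : ℝ) * u k ^ (3 - γ))
      = ENNReal.ofReal ((32 * R ^ (3-γ)) * q ^ k) := by
    intro k
    congr 1
    have e1 : ((2:ℝ) ^ (k : ℕ)) ^ (3-γ) = q ^ (k : ℕ) := by
      rw [← Real.rpow_natCast (2:ℝ) k, ← Real.rpow_mul (by norm_num : (0:ℝ) ≤ 2),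
        mul_comm ((k : ℕ):ℝ) (3-γ), Real.rpow_mul (by norm_num : (0:ℝ) ≤ 2),
        Real.rpow_natCast]
    simp only [hudef]
    rw [Real.mul_rpow hR.le (by positivity), e1]
    ring
  simp_rw [hterm]
  refine le_trans (tsum_geo_le (by positivity) hq0.le hq1) ?_
  exact ENNReal.ofReal_le_ofReal (le_of_eq (by ring))

end Aux

/-- Lemma 4.1 of the paper. For `α, β ∈ (0,3)` with `α + β > 3`
there is `C > 0`, depending only on `α, β`, such that for all `ε ∈ (0,1)` and
`x, z ∈ ℝ×𝕋`, `∫_{ℝ×𝕋} |x−y|^{−α} (|y−z|+ε)^{−β} dy ≤ C (|x−z|+ε)^{3−α−β}`. -/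
theorem stmt5 (α β : ℝ) (hα : α ∈ Set.Ioo (0:ℝ) 3) (hβ : β ∈ Set.Ioo (0:ℝ) 3)
    (hαβ : 3 < α + β) :
    ∃ C : ℝ, 0 < C ∧ ∀ ε : ℝ, ε ∈ Set.Ioo (0:ℝ) 1 →
      ∀ x z : ℝ × AddCircle (1 : ℝ),
        (∫⁻ y : ℝ × AddCircle (1 : ℝ),
            ENNReal.ofReal (pnorm (x - y) ^ (-α) * (pnorm (y - z) + ε) ^ (-β)))
          ≤ ENNReal.ofReal (C * (pnorm (x - z) + ε) ^ (3 - α - β)) := by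
  obtain ⟨hα0, hα3⟩ := hα
  obtain ⟨hβ0, hβ3⟩ := hβ
  obtain ⟨CA, hCA, HA⟩ := lemA ⟨hα0, hα3⟩
  obtain ⟨CB, hCB, HB⟩ := lemA ⟨hβ0, hβ3⟩
  obtain ⟨CC, hCC, HC⟩ := lemB hαβ
  set t : ℝ := (2:ℝ) ^ (α + β - 3) with htdef
  have htpos : 0 < t := Real.rpow_pos_of_pos two_pos _
  have h3β : (0:ℝ) < (3:ℝ) ^ β := Real.rpow_pos_of_pos (by norm_num) _
  refine ⟨CA * t + CB * t + (3:ℝ) ^ β * CC * t, by positivity, fun ε hε x z => ?_⟩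
  obtain ⟨hε0, hε1⟩ := hε
  have hxz := pnorm_nonneg (x - z)
  set r : ℝ := pnorm (x - z) + ε with hrdef
  have hr0 : 0 < r := by rw [hrdef]; linarith
  have hr2 : 0 < r / 2 := by linarith
  -- exponent arithmetic for halving
  have e2 : ((2:ℝ) ^ ((3:ℝ) - α - β))⁻¹ = t := by
    rw [← Real.rpow_neg (by norm_num : (0:ℝ) ≤ 2), htdef]
    congr 1
    ring
  have ehalf : ((r/2):ℝ) ^ ((3:ℝ) - α - β) = t * r ^ ((3:ℝ) - α - β) := by
    rw [Real.div_rpow hr0.le (by norm_num : (0:ℝ) ≤ 2), div_eq_mul_inv, e2]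
    ring
  -- measurability helpers
  have measb : ∀ γ : ℝ, Measurable fun w : ℝ × AddCircle (1:ℝ) =>
      ENNReal.ofReal (pnorm w ^ (-γ)) := fun γ => by
    have h := measurable_pnorm
    fun_prop
  have msball : ∀ s : ℝ, MeasurableSet {w : ℝ × AddCircle (1:ℝ) | pnorm w ≤ s} :=
    fun s => measurable_pnorm measurableSet_Iic
  have msout : MeasurableSet {w : ℝ × AddCircle (1:ℝ) | r/2 < pnorm w} :=
    measurable_pnorm measurableSet_Ioi
  set E1 : Set (ℝ × AddCircle (1:ℝ)) := {y | pnorm (x - y) ≤ r/2} with hE1def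
  set E2 : Set (ℝ × AddCircle (1:ℝ)) := {y | pnorm (y - z) + ε ≤ r/2} with hE2def
  set E3 : Set (ℝ × AddCircle (1:ℝ)) := (E1 ∪ E2)ᶜ with hE3def
  -- Piece 1
  have piece1 : ∫⁻ y in E1,
      ENNReal.ofReal (pnorm (x - y) ^ (-α) * (pnorm (y - z) + ε) ^ (-β))
      ≤ ENNReal.ofReal (CA * t * r ^ ((3:ℝ) - α - β)) := by
    have key : ∀ y ∈ E1,
        ENNReal.ofReal (pnorm (x - y) ^ (-α) * (pnorm (y - z) + ε) ^ (-β))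
        ≤ ENNReal.ofReal ((r/2) ^ (-β)) * ENNReal.ofReal (pnorm (x - y) ^ (-α)) := by
      intro y hy
      rw [← ENNReal.ofReal_mul (Real.rpow_nonneg hr2.le _)]
      apply ENNReal.ofReal_le_ofReal
      have hy' : pnorm (x - y) ≤ r/2 := hy
      have htri : pnorm (x - z) ≤ pnorm (x - y) + pnorm (y - z) := pnorm_triangle x y z
      have hb : r/2 ≤ pnorm (y - z) + ε := by
        rw [hrdef] at hy' ⊢
        linarith
      have hbb : (pnorm (y - z) + ε) ^ (-β) ≤ (r/2) ^ (-β) :=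
        Real.rpow_le_rpow_of_nonpos hr2 hb (neg_nonpos.mpr hβ0.le)
      calc pnorm (x - y) ^ (-α) * (pnorm (y - z) + ε) ^ (-β)
          ≤ pnorm (x - y) ^ (-α) * (r/2) ^ (-β) :=
            mul_le_mul_of_nonneg_left hbb (Real.rpow_nonneg (pnorm_nonneg _) _)
        _ = (r/2) ^ (-β) * pnorm (x - y) ^ (-α) := mul_comm _ _
    have hshift : ∫⁻ y in E1, ENNReal.ofReal (pnorm (x - y) ^ (-α))
        = ∫⁻ w in {w : ℝ × AddCircle (1:ℝ) | pnorm w ≤ r/2},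
            ENNReal.ofReal (pnorm w ^ (-α)) :=
      setLIntegral_shift_left (fun w => ENNReal.ofReal (pnorm w ^ (-α)))
        (measb α) (msball (r/2)) x
    calc ∫⁻ y in E1, ENNReal.ofReal (pnorm (x - y) ^ (-α) * (pnorm (y - z) + ε) ^ (-β))
        ≤ ∫⁻ y in E1, ENNReal.ofReal ((r/2) ^ (-β)) * ENNReal.ofReal (pnorm (x - y) ^ (-α)) :=
          setLIntegral_mono
            (measurable_const.mul ((measb α).comp (measurable_id.const_sub x))) key
      _ = ENNReal.ofReal ((r/2) ^ (-β)) * ∫⁻ y in E1, ENNReal.ofReal (pnorm (x - y) ^ (-α)) :=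
          lintegral_const_mul' _ _ ENNReal.ofReal_ne_top
      _ = ENNReal.ofReal ((r/2) ^ (-β)) * ∫⁻ w in {w : ℝ × AddCircle (1:ℝ) | pnorm w ≤ r/2},
            ENNReal.ofReal (pnorm w ^ (-α)) := by rw [hshift]
      _ ≤ ENNReal.ofReal ((r/2) ^ (-β)) * ENNReal.ofReal (CA * (r/2) ^ ((3:ℝ) - α)) :=
          mul_le_mul_right (HA (r/2) hr2) _
      _ = ENNReal.ofReal (CA * t * r ^ ((3:ℝ) - α - β)) := by
          rw [← ENNReal.ofReal_mul (Real.rpow_nonneg hr2.le _)]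
          congr 1
          rw [show (r/2) ^ (-β) * (CA * (r/2) ^ ((3:ℝ) - α))
              = CA * ((r/2) ^ (-β) * (r/2) ^ ((3:ℝ) - α)) by ring,
            ← Real.rpow_add hr2,
            show -β + ((3:ℝ) - α) = (3:ℝ) - α - β by ring, ehalf]
          ring
  -- Piece 2
  have hNnull : volume {y : ℝ × AddCircle (1:ℝ) | pnorm (y - z) = 0} = 0 := by
    have hsub : {y : ℝ × AddCircle (1:ℝ) | pnorm (y - z) = 0} ⊆ {z} := by
      intro y hy
      have hy' : Real.sqrt |(y - z).1| + ‖(y - z).2‖ = 0 := hy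
      have h1 : Real.sqrt |(y - z).1| = 0 := by
        nlinarith [norm_nonneg (y - z).2, Real.sqrt_nonneg |(y - z).1|]
      have h2 : ‖(y - z).2‖ = 0 := by linarith
      have h1' : (y - z).1 = 0 := by
        have hle : |(y - z).1| ≤ 0 := Real.sqrt_eq_zero'.mp h1
        have := abs_nonneg (y - z).1
        exact abs_eq_zero.mp (le_antisymm hle this)
      have h2' : (y - z).2 = 0 := norm_eq_zero.mp h2
      have hyz : y - z = 0 := by
        rw [Prod.ext_iff]
        exact ⟨by simpa using h1', by simpa using h2'⟩
      have : y = z := sub_eq_zero.mp hyz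
      simp [this]
    have hz : volume ({z} : Set (ℝ × AddCircle (1:ℝ))) = 0 := by
      have hzz : ({z} : Set (ℝ × AddCircle (1:ℝ))) = {z.1} ×ˢ {z.2} := by
        rw [Set.singleton_prod_singleton]
      rw [hzz, Measure.volume_eq_prod, Measure.prod_prod, Real.volume_singleton, zero_mul]
    exact measure_mono_null hsub hz
  have piece2 : ∫⁻ y in E2,
      ENNReal.ofReal (pnorm (x - y) ^ (-α) * (pnorm (y - z) + ε) ^ (-β))
      ≤ ENNReal.ofReal (CB * t * r ^ ((3:ℝ) - α - β)) := by
    set N : Set (ℝ × AddCircle (1:ℝ)) := {y | pnorm (y - z) = 0} with hNdef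
    have hNzero : ∫⁻ y in N,
        ENNReal.ofReal (pnorm (x - y) ^ (-α) * (pnorm (y - z) + ε) ^ (-β)) = 0 :=
      setLIntegral_measure_zero _ _ hNnull
    have key : ∀ y ∈ E2 \ N,
        ENNReal.ofReal (pnorm (x - y) ^ (-α) * (pnorm (y - z) + ε) ^ (-β))
        ≤ ENNReal.ofReal ((r/2) ^ (-α)) * ENNReal.ofReal (pnorm (y - z) ^ (-β)) := by
      rintro y ⟨hy, hyN⟩
      rw [← ENNReal.ofReal_mul (Real.rpow_nonneg hr2.le _)]
      apply ENNReal.ofReal_le_ofReal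
      have hy' : pnorm (y - z) + ε ≤ r/2 := hy
      have hyzpos : 0 < pnorm (y - z) :=
        lt_of_le_of_ne (pnorm_nonneg _) (Ne.symm (by simpa [hNdef] using hyN))
      have htri : pnorm (x - z) ≤ pnorm (x - y) + pnorm (y - z) := pnorm_triangle x y z
      have ha : r/2 ≤ pnorm (x - y) := by
        rw [hrdef] at hy' ⊢
        linarith
      have haa : pnorm (x - y) ^ (-α) ≤ (r/2) ^ (-α) :=
        Real.rpow_le_rpow_of_nonpos hr2 ha (neg_nonpos.mpr hα0.le)
      have hbb : (pnorm (y - z) + ε) ^ (-β) ≤ pnorm (y - z) ^ (-β) :=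
        Real.rpow_le_rpow_of_nonpos hyzpos (le_add_of_nonneg_right hε0.le)
          (neg_nonpos.mpr hβ0.le)
      exact mul_le_mul haa hbb (Real.rpow_nonneg (by positivity) _)
        (Real.rpow_nonneg hr2.le _)
    have hsub2 : E2 \ N ⊆ {y : ℝ × AddCircle (1:ℝ) | pnorm (y - z) ≤ r/2} := by
      rintro y ⟨hy, -⟩
      have hy' : pnorm (y - z) + ε ≤ r/2 := hy
      show pnorm (y - z) ≤ r/2
      linarith
    have hshift : ∫⁻ y in {y : ℝ × AddCircle (1:ℝ) | pnorm (y - z) ≤ r/2},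
        ENNReal.ofReal (pnorm (y - z) ^ (-β))
        = ∫⁻ w in {w : ℝ × AddCircle (1:ℝ) | pnorm w ≤ r/2},
            ENNReal.ofReal (pnorm w ^ (-β)) :=
      setLIntegral_shift_right (fun w => ENNReal.ofReal (pnorm w ^ (-β)))
        (measb β) (msball (r/2)) z
    have main2 : ∫⁻ y in E2 \ N,
        ENNReal.ofReal (pnorm (x - y) ^ (-α) * (pnorm (y - z) + ε) ^ (-β))
        ≤ ENNReal.ofReal (CB * t * r ^ ((3:ℝ) - α - β)) := by
      calc ∫⁻ y in E2 \ N,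
          ENNReal.ofReal (pnorm (x - y) ^ (-α) * (pnorm (y - z) + ε) ^ (-β))
          ≤ ∫⁻ y in E2 \ N,
            ENNReal.ofReal ((r/2) ^ (-α)) * ENNReal.ofReal (pnorm (y - z) ^ (-β)) :=
            setLIntegral_mono
              (measurable_const.mul ((measb β).comp (measurable_id.sub_const z))) key
        _ ≤ ∫⁻ y in {y : ℝ × AddCircle (1:ℝ) | pnorm (y - z) ≤ r/2},
            ENNReal.ofReal ((r/2) ^ (-α)) * ENNReal.ofReal (pnorm (y - z) ^ (-β)) :=
            lintegral_mono_set hsub2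
        _ = ENNReal.ofReal ((r/2) ^ (-α)) * ∫⁻ y in {y : ℝ × AddCircle (1:ℝ) | pnorm (y - z) ≤ r/2},
            ENNReal.ofReal (pnorm (y - z) ^ (-β)) :=
            lintegral_const_mul' _ _ ENNReal.ofReal_ne_top
        _ = ENNReal.ofReal ((r/2) ^ (-α)) * ∫⁻ w in {w : ℝ × AddCircle (1:ℝ) | pnorm w ≤ r/2},
            ENNReal.ofReal (pnorm w ^ (-β)) := by rw [hshift]
        _ ≤ ENNReal.ofReal ((r/2) ^ (-α)) * ENNReal.ofReal (CB * (r/2) ^ ((3:ℝ) - β)) :=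
            mul_le_mul_right (HB (r/2) hr2) _
        _ = ENNReal.ofReal (CB * t * r ^ ((3:ℝ) - α - β)) := by
            rw [← ENNReal.ofReal_mul (Real.rpow_nonneg hr2.le _)]
            congr 1
            rw [show (r/2) ^ (-α) * (CB * (r/2) ^ ((3:ℝ) - β))
                = CB * ((r/2) ^ (-α) * (r/2) ^ ((3:ℝ) - β)) by ring,
              ← Real.rpow_add hr2,
              show -α + ((3:ℝ) - β) = (3:ℝ) - α - β by ring, ehalf]
            ring
    calc ∫⁻ y in E2, ENNReal.ofReal (pnorm (x - y) ^ (-α) * (pnorm (y - z) + ε) ^ (-β))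
        ≤ ∫⁻ y in (E2 \ N) ∪ N,
          ENNReal.ofReal (pnorm (x - y) ^ (-α) * (pnorm (y - z) + ε) ^ (-β)) :=
          lintegral_mono_set (Set.subset_diff_union E2 N)
      _ ≤ (∫⁻ y in E2 \ N,
          ENNReal.ofReal (pnorm (x - y) ^ (-α) * (pnorm (y - z) + ε) ^ (-β)))
          + ∫⁻ y in N,
          ENNReal.ofReal (pnorm (x - y) ^ (-α) * (pnorm (y - z) + ε) ^ (-β)) :=
          lintegral_union_le _ _ _
      _ ≤ ENNReal.ofReal (CB * t * r ^ ((3:ℝ) - α - β)) + 0 := by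
          rw [hNzero]
          exact add_le_add_left main2 _
      _ = ENNReal.ofReal (CB * t * r ^ ((3:ℝ) - α - β)) := add_zero _
  -- Piece 3
  have piece3 : ∫⁻ y in E3,
      ENNReal.ofReal (pnorm (x - y) ^ (-α) * (pnorm (y - z) + ε) ^ (-β))
      ≤ ENNReal.ofReal ((3:ℝ) ^ β * CC * t * r ^ ((3:ℝ) - α - β)) := by
    have key : ∀ y ∈ E3,
        ENNReal.ofReal (pnorm (x - y) ^ (-α) * (pnorm (y - z) + ε) ^ (-β))
        ≤ ENNReal.ofReal ((3:ℝ) ^ β) * ENNReal.ofReal (pnorm (x - y) ^ (-(α + β))) := by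
      intro y hy
      rw [← ENNReal.ofReal_mul h3β.le]
      apply ENNReal.ofReal_le_ofReal
      rw [hE3def, Set.mem_compl_iff, Set.mem_union, not_or] at hy
      obtain ⟨hy1, hy2⟩ := hy
      have hy1' : ¬ pnorm (x - y) ≤ r/2 := hy1
      have hy2' : ¬ pnorm (y - z) + ε ≤ r/2 := hy2
      have ha : r/2 < pnorm (x - y) := lt_of_not_ge hy1'
      have hb : r/2 < pnorm (y - z) + ε := lt_of_not_ge hy2'
      have hzy : pnorm (z - y) = pnorm (y - z) := by
        rw [← neg_sub y z, pnorm_neg]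
      have htri : pnorm (x - y) ≤ pnorm (x - z) + pnorm (z - y) := pnorm_triangle x z y
      have ha3 : pnorm (x - y) / 3 ≤ pnorm (y - z) + ε := by
        rw [hzy] at htri
        rw [hrdef] at hb
        linarith
      have hapos : 0 < pnorm (x - y) := lt_trans hr2 ha
      have h1 : (pnorm (y - z) + ε) ^ (-β) ≤ (pnorm (x - y) / 3) ^ (-β) :=
        Real.rpow_le_rpow_of_nonpos (by positivity) ha3 (neg_nonpos.mpr hβ0.le)
      have h2 : (pnorm (x - y) / 3) ^ (-β) = (3:ℝ) ^ β * pnorm (x - y) ^ (-β) := by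
        rw [Real.div_rpow (pnorm_nonneg _) (by norm_num : (0:ℝ) ≤ 3),
          Real.rpow_neg (by norm_num : (0:ℝ) ≤ 3), div_inv_eq_mul]
        ring
      have h3 : pnorm (x - y) ^ (-α) * pnorm (x - y) ^ (-β)
          = pnorm (x - y) ^ (-(α + β)) := by
        rw [← Real.rpow_add hapos]
        ring_nf
      calc pnorm (x - y) ^ (-α) * (pnorm (y - z) + ε) ^ (-β)
          ≤ pnorm (x - y) ^ (-α) * ((pnorm (x - y) / 3) ^ (-β)) :=
            mul_le_mul_of_nonneg_left h1 (Real.rpow_nonneg (pnorm_nonneg _) _)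
        _ = (3:ℝ) ^ β * (pnorm (x - y) ^ (-α) * pnorm (x - y) ^ (-β)) := by
            rw [h2]; ring
        _ = (3:ℝ) ^ β * pnorm (x - y) ^ (-(α + β)) := by rw [h3]
    have hsub3 : E3 ⊆ {y : ℝ × AddCircle (1:ℝ) | r/2 < pnorm (x - y)} := by
      intro y hy
      rw [hE3def, Set.mem_compl_iff, Set.mem_union, not_or] at hy
      have hy1' : ¬ pnorm (x - y) ≤ r/2 := hy.1
      exact lt_of_not_ge hy1'
    have hshift : ∫⁻ y in {y : ℝ × AddCircle (1:ℝ) | r/2 < pnorm (x - y)},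
        ENNReal.ofReal (pnorm (x - y) ^ (-(α + β)))
        = ∫⁻ w in {w : ℝ × AddCircle (1:ℝ) | r/2 < pnorm w},
            ENNReal.ofReal (pnorm w ^ (-(α + β))) :=
      setLIntegral_shift_left (fun w => ENNReal.ofReal (pnorm w ^ (-(α + β))))
        (measb (α + β)) msout x
    calc ∫⁻ y in E3, ENNReal.ofReal (pnorm (x - y) ^ (-α) * (pnorm (y - z) + ε) ^ (-β))
        ≤ ∫⁻ y in E3,
          ENNReal.ofReal ((3:ℝ) ^ β) * ENNReal.ofReal (pnorm (x - y) ^ (-(α + β))) :=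
          setLIntegral_mono
            (measurable_const.mul ((measb (α + β)).comp (measurable_id.const_sub x))) key
      _ ≤ ∫⁻ y in {y : ℝ × AddCircle (1:ℝ) | r/2 < pnorm (x - y)},
          ENNReal.ofReal ((3:ℝ) ^ β) * ENNReal.ofReal (pnorm (x - y) ^ (-(α + β))) :=
          lintegral_mono_set hsub3
      _ = ENNReal.ofReal ((3:ℝ) ^ β) * ∫⁻ y in {y : ℝ × AddCircle (1:ℝ) | r/2 < pnorm (x - y)},
          ENNReal.ofReal (pnorm (x - y) ^ (-(α + β))) :=
          lintegral_const_mul' _ _ ENNReal.ofReal_ne_top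
      _ = ENNReal.ofReal ((3:ℝ) ^ β) * ∫⁻ w in {w : ℝ × AddCircle (1:ℝ) | r/2 < pnorm w},
          ENNReal.ofReal (pnorm w ^ (-(α + β))) := by rw [hshift]
      _ ≤ ENNReal.ofReal ((3:ℝ) ^ β) * ENNReal.ofReal (CC * (r/2) ^ ((3:ℝ) - (α + β))) :=
          mul_le_mul_right (HC (r/2) hr2) _
      _ = ENNReal.ofReal ((3:ℝ) ^ β * CC * t * r ^ ((3:ℝ) - α - β)) := by
          rw [← ENNReal.ofReal_mul h3β.le]
          congr 1
          rw [show (3:ℝ) - (α + β) = (3:ℝ) - α - β by ring, ehalf]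
          ring
  -- Combine
  have cover : (Set.univ : Set (ℝ × AddCircle (1:ℝ))) = (E1 ∪ E2) ∪ E3 :=
    (Set.union_compl_self _).symm
  calc (∫⁻ y : ℝ × AddCircle (1 : ℝ),
        ENNReal.ofReal (pnorm (x - y) ^ (-α) * (pnorm (y - z) + ε) ^ (-β)))
      = ∫⁻ y in Set.univ,
        ENNReal.ofReal (pnorm (x - y) ^ (-α) * (pnorm (y - z) + ε) ^ (-β)) :=
        (setLIntegral_univ _).symm
    _ = ∫⁻ y in (E1 ∪ E2) ∪ E3,
        ENNReal.ofReal (pnorm (x - y) ^ (-α) * (pnorm (y - z) + ε) ^ (-β)) := by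
        rw [← cover]
    _ ≤ (∫⁻ y in E1 ∪ E2,
        ENNReal.ofReal (pnorm (x - y) ^ (-α) * (pnorm (y - z) + ε) ^ (-β)))
        + ∫⁻ y in E3,
        ENNReal.ofReal (pnorm (x - y) ^ (-α) * (pnorm (y - z) + ε) ^ (-β)) :=
        lintegral_union_le _ _ _
    _ ≤ ((∫⁻ y in E1,
        ENNReal.ofReal (pnorm (x - y) ^ (-α) * (pnorm (y - z) + ε) ^ (-β)))
        + ∫⁻ y in E2,
        ENNReal.ofReal (pnorm (x - y) ^ (-α) * (pnorm (y - z) + ε) ^ (-β)))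
        + ∫⁻ y in E3,
        ENNReal.ofReal (pnorm (x - y) ^ (-α) * (pnorm (y - z) + ε) ^ (-β)) :=
        add_le_add_left (lintegral_union_le _ _ _) _
    _ ≤ (ENNReal.ofReal (CA * t * r ^ ((3:ℝ) - α - β))
        + ENNReal.ofReal (CB * t * r ^ ((3:ℝ) - α - β)))
        + ENNReal.ofReal ((3:ℝ) ^ β * CC * t * r ^ ((3:ℝ) - α - β)) :=
        add_le_add (add_le_add piece1 piece2) piece3
    _ = ENNReal.ofReal ((CA * t + CB * t + (3:ℝ) ^ β * CC * t) * r ^ ((3:ℝ) - α - β)) := by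
        rw [← ENNReal.ofReal_add (by positivity) (by positivity),
          ← ENNReal.ofReal_add (by positivity) (by positivity)]
        congr 1
        ring
end

section
/- Let Q : ℝ → ℝ be an even polynomial of degree 2n ≥ 4 such that Q(0) = 0, Q(r) > 0 for all r ≠ 0, and the coefficient of r² in Q equals 1, and let a ≥ 1 be an integer. Then there exists a constant C > 0, depending only on Q and a, such that for all c ∈ (0,1) and all k ∈ ℝ one has |Q^{(a)}(2πck)| (c + c|k|)^a ≤ C ( c² + Q(2πck) ), where Q^{(a)} denotes the a-th derivative of Q. -/
/-!
Put `x = 2πck`, so that `c|k| ≤ |x|`, and compare both sides in the two regimes `|x| ≤ 1` and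
`|x| ≥ 1`. Near the origin: `Q ≥ 0` and `Q(0) = 0` force `X² ∣ Q`, hence `X^(2-a) ∣ Q^(a)`, and
the positive quadratic coefficient gives `Q(x) ≥ δ x²`; so both sides are comparable to
`c² + x²`.
Away from the origin: `c + |x| ≤ 2|x|` and `Q^(a) · X^a` has degree at most `deg Q`, so it is
`O(Q)` at infinity, and on the remaining compact part `Q` is bounded below by a positive constant.
-/

open Real Polynomial Asymptotics Filter

theorem Asymptotics.IsBigO.principal_of_cocompact {α E F : Type*} [TopologicalSpace α]
    [SeminormedAddGroup E] [NormedAddCommGroup F] {f : α → E} {g : α → F} {s : Set α}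
    (hfg : f =O[cocompact α] g) (hf : Continuous f) (hg : Continuous g) (hs : IsClosed s)
    (hg0 : ∀ x ∈ s, g x ≠ 0) : f =O[𝓟 s] g := by
  obtain ⟨C, hC⟩ := hfg.bound
  obtain ⟨t, ht, htC⟩ := mem_cocompact.mp hC
  have hK : IsCompact (t ∩ s) := ht.inter_right hs
  have hinside : f =O[𝓟 (t ∩ s)] g :=
    (hf.continuousOn.isBigO_principal hK (c := (1 : ℝ)) (by norm_num)).trans
      (hg.continuousOn.isBigO_rev_principal hK (fun x hx => hg0 x hx.2) 1)
  have houtside : f =O[𝓟 tᶜ] g := isBigO_principal.mpr ⟨C, htC⟩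
  refine (hinside.sup houtside).mono ?_
  rw [sup_principal, principal_mono]
  exact fun x hx => (em (x ∈ t)).imp (fun hxt => ⟨hxt, hx⟩) id

theorem pow_tsub_mul_add_pow_le_two_pow_mul {c y : ℝ} (hc : 0 ≤ c) (hy : 0 ≤ y)
    (hc1 : c ≤ 1) (hy1 : y ≤ 1) (a : ℕ) : y ^ (2 - a) * (c + y) ^ a ≤ 2 ^ (a + 1) * (c ^ 2 + y ^ 2) := by
  calc y ^ (2 - a) * (c + y) ^ a ≤ (c + y) ^ (2 - a) * (c + y) ^ a := by gcongr; linarith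
    _ = (c + y) ^ (a - 2) * (c + y) ^ 2 := by rw [← pow_add, ← pow_add]; congr 1; omega
    _ ≤ 2 ^ (a - 2) * (2 * (c ^ 2 + y ^ 2)) := by
        gcongr
        · linarith
        · nlinarith [sq_nonneg (c - y)]
    _ ≤ 2 ^ a * (2 * (c ^ 2 + y ^ 2)) := by gcongr <;> norm_num
    _ = 2 ^ (a + 1) * (c ^ 2 + y ^ 2) := by ring

namespace Polynomial

theorem degree_iterate_derivative_mul_X_pow_le {R : Type*} [Semiring R] (p : R[X]) (k : ℕ) :
    (derivative^[k] p * X ^ k).degree ≤ p.degree := by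
  rcases lt_or_ge p.natDegree k with hk | hk
  · simp [iterate_derivative_eq_zero hk]
  rcases eq_or_ne p 0 with rfl | hp
  · simp
  rw [degree_eq_natDegree hp]
  refine degree_le_of_natDegree_le (natDegree_mul_le.trans ?_)
  have := add_le_add (natDegree_iterate_derivative p k) (natDegree_X_pow_le (R := R) k)
  omega

theorem exists_abs_eval_le_mul_eval_of_degree_le {p q : ℝ[X]} (h : p.degree ≤ q.degree)
    (hq : ∀ x : ℝ, 1 ≤ |x| → 0 < q.eval x) :
    ∃ D, 0 ≤ D ∧ ∀ x : ℝ, 1 ≤ |x| → |p.eval x| ≤ D * q.eval x := by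
  have hO : (fun x => p.eval x) =O[𝓟 {x | 1 ≤ |x|}] fun x => q.eval x := by
    refine IsBigO.principal_of_cocompact ?_ p.continuous q.continuous
      (isClosed_le continuous_const continuous_abs) fun x hx => (hq x hx).ne'
    rw [← Metric.cobounded_eq_cocompact]
    exact isBigO_cobounded_of_degree_le h
  obtain ⟨D, hD, hDbound⟩ := hO.exists_nonneg
  refine ⟨D, hD, fun x hx => ?_⟩
  simpa [abs_of_pos (hq x hx)] using isBigOWith_principal.mp hDbound x hx

theorem exists_abs_eval_le_mul_abs_pow_of_X_pow_dvd {p : ℝ[X]} {m : ℕ} (h : X ^ m ∣ p) :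
    ∃ L, 0 ≤ L ∧ ∀ x : ℝ, |x| ≤ 1 → |p.eval x| ≤ L * |x| ^ m := by
  obtain ⟨r, rfl⟩ := h
  obtain ⟨L, hL⟩ := (isCompact_closedBall (0 : ℝ) 1).exists_bound_of_continuousOn
    (f := fun x => r.eval x) r.continuous.continuousOn
  refine ⟨max L 0, le_max_right _ _, fun x hx => ?_⟩
  have hrx : |r.eval x| ≤ L := by simpa using hL x (by simpa using hx)
  rw [eval_mul, eval_pow, eval_X, abs_mul, abs_pow, mul_comm]
  exact mul_le_mul_of_nonneg_right (hrx.trans (le_max_left _ _)) (by positivity)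

theorem eval_nonneg_of_eval_zero {p : ℝ[X]} (h0 : p.eval 0 = 0)
    (hpos : ∀ x : ℝ, x ≠ 0 → 0 < p.eval x) (x : ℝ) : 0 ≤ p.eval x := by
  rcases eq_or_ne x 0 with rfl | hx
  · exact h0.ge
  · exact (hpos x hx).le

theorem X_sq_dvd_of_eval_zero_of_nonneg {p : ℝ[X]} (h0 : p.eval 0 = 0)
    (hp : ∀ x : ℝ, 0 ≤ p.eval x) : X ^ 2 ∣ p := by
  have hmin : IsLocalMin (fun x => p.eval x) 0 := Eventually.of_forall fun x => h0.trans_le (hp x)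
  have hderiv : p.derivative.eval 0 = 0 := p.deriv ▸ hmin.deriv_eq_zero
  rw [X_pow_dvd_iff]
  intro d hd
  interval_cases d
  · rwa [coeff_zero_eq_eval_zero]
  · simpa [coeff_derivative] using (coeff_zero_eq_eval_zero p.derivative).trans hderiv

theorem exists_sq_le_mul_eval {p : ℝ[X]} (h0 : p.eval 0 = 0)
    (hpos : ∀ x : ℝ, x ≠ 0 → 0 < p.eval x) (h2 : 0 < p.coeff 2) :
    ∃ K, 0 ≤ K ∧ ∀ x : ℝ, |x| ≤ 1 → x ^ 2 ≤ K * p.eval x := by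
  obtain ⟨r, hr⟩ := X_sq_dvd_of_eval_zero_of_nonneg h0 (eval_nonneg_of_eval_zero h0 hpos)
  have hpr : ∀ x, p.eval x = x ^ 2 * r.eval x := fun x => by simp [hr]
  have hr_pos : ∀ x, 0 < r.eval x := by
    intro x
    rcases eq_or_ne x 0 with rfl | hx
    · rw [← coeff_zero_eq_eval_zero]
      simpa [hr, coeff_X_pow_mul'] using h2
    · exact pos_of_mul_pos_right (hpr x ▸ hpos x hx) (sq_nonneg x)
  obtain ⟨K, hK, hKbound⟩ := (r.continuous.continuousOn.isBigO_rev_principal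
    (isCompact_closedBall (0 : ℝ) 1) (fun x _ => (hr_pos x).ne') (1 : ℝ)).exists_nonneg
  refine ⟨K, hK, fun x hx => ?_⟩
  have hrx : 1 ≤ K * r.eval x := by
    simpa [abs_of_pos (hr_pos x)] using isBigOWith_principal.mp hKbound x (by simpa using hx)
  rw [hpr]
  nlinarith [sq_nonneg x]

theorem exists_abs_iterate_derivative_eval_mul_le_of_abs_le_one {Q : ℝ[X]} (h0 : Q.eval 0 = 0)
    (hpos : ∀ x : ℝ, x ≠ 0 → 0 < Q.eval x) (h2 : 0 < Q.coeff 2) (a : ℕ) :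
    ∃ B, ∀ c : ℝ, 0 ≤ c → c ≤ 1 → ∀ x : ℝ, |x| ≤ 1 →
      |(derivative^[a] Q).eval x| * (c + |x|) ^ a ≤ B * (c ^ 2 + Q.eval x) := by
  obtain ⟨L, hL, hPbound⟩ := exists_abs_eval_le_mul_abs_pow_of_X_pow_dvd <|
    pow_sub_dvd_iterate_derivative_of_pow_dvd a <|
      X_sq_dvd_of_eval_zero_of_nonneg h0 (eval_nonneg_of_eval_zero h0 hpos)
  obtain ⟨K, hK, hQbound⟩ := exists_sq_le_mul_eval h0 hpos h2
  refine ⟨L * 2 ^ (a + 1) * (1 + K), fun c hc hc1 x hx => ?_⟩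
  have hQx := eval_nonneg_of_eval_zero h0 hpos x
  calc |(derivative^[a] Q).eval x| * (c + |x|) ^ a ≤ L * (|x| ^ (2 - a) * (c + |x|) ^ a) := by
        rw [← mul_assoc]; gcongr; exact hPbound x hx
    _ ≤ L * (2 ^ (a + 1) * (c ^ 2 + x ^ 2)) := by
        rw [← sq_abs x]
        exact mul_le_mul_of_nonneg_left
          (pow_tsub_mul_add_pow_le_two_pow_mul hc (abs_nonneg x) hc1 hx a) hL
    _ ≤ L * (2 ^ (a + 1) * ((1 + K) * (c ^ 2 + Q.eval x))) := by
        gcongr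
        nlinarith [hQbound x hx, mul_nonneg hK (sq_nonneg c)]
    _ = L * 2 ^ (a + 1) * (1 + K) * (c ^ 2 + Q.eval x) := by ring

theorem exists_abs_iterate_derivative_eval_mul_le_of_one_le_abs {Q : ℝ[X]}
    (hpos : ∀ x : ℝ, x ≠ 0 → 0 < Q.eval x) (a : ℕ) :
    ∃ D, ∀ c : ℝ, 0 ≤ c → c ≤ 1 → ∀ x : ℝ, 1 ≤ |x| →
      |(derivative^[a] Q).eval x| * (c + |x|) ^ a ≤ D * (c ^ 2 + Q.eval x) := by
  obtain ⟨D, hD, hbound⟩ := exists_abs_eval_le_mul_eval_of_degree_le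
    (degree_iterate_derivative_mul_X_pow_le Q a)
    fun x hx => hpos x (abs_pos.mp (one_pos.trans_le hx))
  refine ⟨2 ^ a * D, fun c hc hc1 x hx => ?_⟩
  calc |(derivative^[a] Q).eval x| * (c + |x|) ^ a
      ≤ |(derivative^[a] Q).eval x| * (2 * |x|) ^ a := by gcongr; linarith
    _ = 2 ^ a * |(derivative^[a] Q * X ^ a).eval x| := by
        rw [eval_mul, eval_pow, eval_X, abs_mul, abs_pow, mul_pow]; ring
    _ ≤ 2 ^ a * (D * Q.eval x) := by gcongr; exact hbound x hx
    _ ≤ 2 ^ a * D * (c ^ 2 + Q.eval x) := by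
        rw [mul_assoc]; gcongr; exact le_add_of_nonneg_left (sq_nonneg c)

theorem exists_abs_iterate_derivative_eval_mul_le {Q : ℝ[X]} (h0 : Q.eval 0 = 0)
    (hpos : ∀ x : ℝ, x ≠ 0 → 0 < Q.eval x) (h2 : 0 < Q.coeff 2) (a : ℕ) :
    ∃ C, 0 < C ∧ ∀ c : ℝ, 0 ≤ c → c ≤ 1 → ∀ x : ℝ,
      |(derivative^[a] Q).eval x| * (c + |x|) ^ a ≤ C * (c ^ 2 + Q.eval x) := by
  obtain ⟨B, hnear⟩ := exists_abs_iterate_derivative_eval_mul_le_of_abs_le_one h0 hpos h2 a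
  obtain ⟨D, hfar⟩ := exists_abs_iterate_derivative_eval_mul_le_of_one_le_abs hpos a
  refine ⟨max (max B D) 1, lt_max_of_lt_right one_pos, fun c hc hc1 x => ?_⟩
  have hrhs : 0 ≤ c ^ 2 + Q.eval x :=
    add_nonneg (sq_nonneg c) (eval_nonneg_of_eval_zero h0 hpos x)
  rcases le_total |x| 1 with hx | hx
  · exact (hnear c hc hc1 x hx).trans <| by
      gcongr; exact (le_max_left _ _).trans (le_max_left _ _)
  · exact (hfar c hc hc1 x hx).trans <| by
      gcongr; exact (le_max_right _ _).trans (le_max_left _ _)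

end Polynomial

theorem stmt19_general (Q : Polynomial ℝ)
    (hzero : Q.eval 0 = 0) (hpos : ∀ r : ℝ, r ≠ 0 → 0 < Q.eval r)
    (hcoeff : Q.coeff 2 = 1) (a : ℕ) :
    ∃ C : ℝ, 0 < C ∧ ∀ c : ℝ, c ∈ Set.Ioo (0:ℝ) 1 → ∀ k : ℝ,
      |(Polynomial.derivative^[a] Q).eval (2 * π * c * k)| * (c + c * |k|) ^ a
        ≤ C * (c ^ 2 + Q.eval (2 * π * c * k)) := by
  obtain ⟨C, hC, hbound⟩ :=
    Polynomial.exists_abs_iterate_derivative_eval_mul_le hzero hpos (hcoeff ▸ one_pos) a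
  refine ⟨C, hC, fun c ⟨hc0, hc1⟩ k => le_trans ?_ (hbound c hc0.le hc1.le _)⟩
  have h2π : 1 ≤ 2 * π := by linarith [pi_gt_three]
  have hck : c * |k| ≤ |2 * π * c * k| := by
    rw [abs_mul, abs_of_pos (by positivity : 0 < 2 * π * c), mul_assoc]
    exact le_mul_of_one_le_left (by positivity) h2π
  gcongr

/-- the key factor bound from the proof of Proposition 2.1 of the
paper. If `Q : ℝ → ℝ` is an even polynomial of degree `2n ≥ 4` with `Q(0) = 0`,
`Q(r) > 0` for `r ≠ 0` and quadratic coefficient `1`, and `a ≥ 1` is an integer, then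
there is `C > 0`, depending only on `Q` and `a`, such that for all `c ∈ (0,1)` and
`k ∈ ℝ`, `|Q^{(a)}(2πck)| (c + c|k|)^a ≤ C (c² + Q(2πck))`. -/
theorem stmt19 (Q : Polynomial ℝ) (n : ℕ) (hn : 2 ≤ n) (hdeg : Q.natDegree = 2 * n)
    (heven : ∀ r : ℝ, Q.eval (-r) = Q.eval r)
    (hzero : Q.eval 0 = 0) (hpos : ∀ r : ℝ, r ≠ 0 → 0 < Q.eval r)
    (hcoeff : Q.coeff 2 = 1) (a : ℕ) (ha : 1 ≤ a) :
    ∃ C : ℝ, 0 < C ∧ ∀ c : ℝ, c ∈ Set.Ioo (0:ℝ) 1 → ∀ k : ℝ,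
      |(Polynomial.derivative^[a] Q).eval (2 * π * c * k)| * (c + c * |k|) ^ a
        ≤ C * (c ^ 2 + Q.eval (2 * π * c * k)) :=
  stmt19_general Q hzero hpos hcoeff a
end
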